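/- arXiv:1805.10690 — 7 statements merged into one kernel-verified Lean document; each statement's English description precedes it below -/
import Mathlib

section
/- Let a ≤ b be integers and let ℐ be a nonempty set of discrete intervals contained in [a,b] whose interval graph is connected, such that a belongs to some member of ℐ and b belongs to some member of ℐ. Let Δ denote the minimal length of an interval in ℐ and let δ be a positive integer with δ ≤ ⌊Δ/2⌋. Then there exists a subset ℐ' ⊆ ℐ whose interval graph is connected, such that every integer of [a,b] is contained in exactly one or exactly two members of ℐ', together with a map ι from the set of endpoints of the intervals in ℐ' into δℤ satisfying: (1) |x − ι(x)| ≤ 2δ for every endpoint x; (2) ι is monotone, i.e. x ≤ y implies ι(x) ≤ ι(y), so that in particular whenever two intervals I, J ∈ ℐ' intersect, the intervals [ι(min I), ι(max I)] and [ι(min J), ι(max J)] intersect; (3) every integer is contained in at most two of the intervals [ι(min I), ι(max I)] for I ∈ ℐ'. -/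
def ibase (δ x : ℤ) : ℤ := δ * ((x - δ - 1) / δ)

lemma ibase_dvd (δ x : ℤ) : δ ∣ ibase δ x := ⟨_, rfl⟩

lemma ibase_le (δ x : ℤ) (hδ : 0 < δ) : ibase δ x ≤ x - δ - 1 := by
  have h1 := Int.emod_nonneg (x - δ - 1) (by omega : δ ≠ 0)
  have h3 := Int.mul_ediv_add_emod (x - δ - 1) δ
  unfold ibase; omega

lemma le_ibase (δ x : ℤ) (hδ : 0 < δ) : x - 2*δ ≤ ibase δ x := by
  have h2 := Int.emod_lt_of_pos (x - δ - 1) hδ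
  have h3 := Int.mul_ediv_add_emod (x - δ - 1) δ
  unfold ibase; omega

lemma dvd_max' {δ a b : ℤ} (h1 : δ ∣ a) (h2 : δ ∣ b) : δ ∣ max a b := by
  rcases le_total a b with h | h
  · rwa [max_eq_right h]
  · rwa [max_eq_left h]

def ABaux (δ : ℤ) (l r : ℕ → ℤ) : ℕ → ℤ × ℤ
  | 0 => (max (ibase δ (l 0)) (ibase δ (l 1)),
      max (max (ibase δ (l 0)) (ibase δ (l 1))) (ibase δ (r 0)))
  | k+1 =>
      (max ((ABaux δ l r k).2 + δ) (ibase δ (l (k+2))),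
       max (max ((ABaux δ l r k).2 + δ) (ibase δ (l (k+2)))) (ibase δ (r (k+1))))

def Af (δ : ℤ) (l r : ℕ → ℤ) : ℕ → ℤ
  | 0 => ibase δ (l 0)
  | k+1 => (ABaux δ l r k).1

def Bf (δ : ℤ) (l r : ℕ → ℤ) (k : ℕ) : ℤ := (ABaux δ l r k).2

lemma Af_one (δ : ℤ) (l r : ℕ → ℤ) : Af δ l r 1 = max (Af δ l r 0) (ibase δ (l 1)) := rfl
lemma Af_succ2 (δ : ℤ) (l r : ℕ → ℤ) (k : ℕ) :
    Af δ l r (k+2) = max (Bf δ l r k + δ) (ibase δ (l (k+2))) := rfl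
lemma Bf_zero (δ : ℤ) (l r : ℕ → ℤ) : Bf δ l r 0 = max (Af δ l r 1) (ibase δ (r 0)) := rfl
lemma Bf_succ (δ : ℤ) (l r : ℕ → ℤ) (k : ℕ) :
    Bf δ l r (k+1) = max (Af δ l r (k+2)) (ibase δ (r (k+1))) := rfl

section ABlemmas

variable {δ : ℤ} {l r : ℕ → ℤ} (hδ : 0 < δ)
  (h4a : ∀ k, l (k+1) ≤ r k) (h4b : ∀ k, r k < r (k+1))
  (h5 : ∀ k, r k < l (k+2)) (h6 : ∀ k, l k < l (k+1))
  (h7 : ∀ k, 2*δ ≤ r k - l k)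

include h6 in
lemma lmono : StrictMono l := strictMono_nat_of_lt_succ h6

include h4b in
lemma rmono : StrictMono r := strictMono_nat_of_lt_succ h4b

include h5 h6 in
lemma wall_lt {i j : ℕ} (h : i + 2 ≤ j) : r i < l j :=
  lt_of_lt_of_le (h5 i) ((lmono h6).monotone h)

lemma A_ge_base (k : ℕ) : ibase δ (l k) ≤ Af δ l r k := by
  match k with
  | 0 => exact le_refl _
  | 1 => exact le_max_right _ _
  | (k+2) => exact le_max_right _ _

lemma AB (k : ℕ) : Af δ l r (k+1) ≤ Bf δ l r k := by
  match k with
  | 0 => exact le_max_left _ _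
  | (k+1) => exact le_max_left _ _

lemma BA (k : ℕ) : Bf δ l r k + δ ≤ Af δ l r (k+2) := le_max_left _ _

include hδ in
lemma Asucc (k : ℕ) : Af δ l r k ≤ Af δ l r (k+1) := by
  match k with
  | 0 => exact le_max_left _ _
  | (k+1) =>
    have h1 : Af δ l r (k+1) ≤ Bf δ l r k := AB k
    have h2 : Bf δ l r k + δ ≤ Af δ l r (k+2) := BA k
    have e1 : Af δ l r (k+1+1) = Af δ l r (k+2) := rfl
    omega

include hδ in
lemma Amono {i j : ℕ} (h : i ≤ j) : Af δ l r i ≤ Af δ l r j :=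
  monotone_nat_of_le_succ (Asucc hδ) h

include hδ in
lemma Bsucc (k : ℕ) : Bf δ l r k ≤ Bf δ l r (k+1) := by
  have h1 : Bf δ l r k + δ ≤ Af δ l r (k+2) := BA k
  have h2 : Af δ l r (k+2) ≤ Bf δ l r (k+1) := AB (k+1)
  omega

include hδ in
lemma Bmono {i j : ℕ} (h : i ≤ j) : Bf δ l r i ≤ Bf δ l r j :=
  monotone_nat_of_le_succ (Bsucc hδ) h

include hδ in
lemma AleB (k : ℕ) : Af δ l r k ≤ Bf δ l r k := le_trans (Asucc hδ k) (AB k)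

include hδ in
lemma Alb (k : ℕ) : l k - 2*δ ≤ Af δ l r k := le_trans (le_ibase δ _ hδ) (A_ge_base k)

include hδ in
lemma Blb (k : ℕ) : r k - 2*δ ≤ Bf δ l r k := by
  have h : ibase δ (r k) ≤ Bf δ l r k := by
    match k with
    | 0 => exact le_max_right _ _
    | (k+1) => exact le_max_right _ _
  have := le_ibase δ (r k) hδ
  omega

lemma Advd_of_B (k : ℕ) (h : δ ∣ Bf δ l r k) : δ ∣ Af δ l r (k+2) := by
  rw [Af_succ2]
  exact dvd_max' (h.add dvd_rfl) (ibase_dvd δ _)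

lemma Bdvd (k : ℕ) : δ ∣ Bf δ l r k := by
  induction k with
  | zero => exact dvd_max' (dvd_max' (ibase_dvd δ _) (ibase_dvd δ _)) (ibase_dvd δ _)
  | succ k ih =>
    rw [Bf_succ]
    exact dvd_max' (Advd_of_B k ih) (ibase_dvd δ _)

lemma Advd (k : ℕ) : δ ∣ Af δ l r k := by
  match k with
  | 0 => exact ibase_dvd δ _
  | 1 => exact dvd_max' (ibase_dvd δ _) (ibase_dvd δ _)
  | (k+2) => exact Advd_of_B k (Bdvd k)

include hδ h4a h6 in
lemma Bub0 : Bf δ l r 0 ≤ r 0 - δ - 1 := by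
  have b0 := ibase_le δ (l 0) hδ
  have b1 := ibase_le δ (l 1) hδ
  have b2 := ibase_le δ (r 0) hδ
  have c1 : l 1 ≤ r 0 := h4a 0
  have c2 : l 0 < l 1 := h6 0
  have E : Bf δ l r 0 = max (max (ibase δ (l 0)) (ibase δ (l 1))) (ibase δ (r 0)) := rfl
  omega

include hδ h4a h4b h5 h6 h7 in
lemma Bub (k : ℕ) : Bf δ l r (k+1) ≤ max (r (k+1) - δ - 1) (r k + δ - 1) := by
  induction k using Nat.strong_induction_on with
  | _ k IH =>
    match k with
    | 0 =>
      have h0 := Bub0 hδ h4a h6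
      have b2 := ibase_le δ (l 2) hδ
      have b3 := ibase_le δ (r 1) hδ
      have c1 : l 2 ≤ r 1 := h4a 1
      have c2 : r 0 < r 1 := h4b 0
      have E : Bf δ l r 1 = max (max (Bf δ l r 0 + δ) (ibase δ (l 2))) (ibase δ (r 1)) := rfl
      have g1 : Bf δ l r (0+1) = Bf δ l r 1 := rfl
      have g2 : r (0+1) = r 1 := rfl
      omega
    | 1 =>
      have h0 := Bub0 hδ h4a h6
      have bl2 := ibase_le δ (l 2) hδ
      have br1 := ibase_le δ (r 1) hδ
      have bl3 := ibase_le δ (l 3) hδ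
      have br2 := ibase_le δ (r 2) hδ
      have c1 : l 2 ≤ r 1 := h4a 1
      have c2 : l 3 ≤ r 2 := h4a 2
      have c3 : r 0 < r 1 := h4b 0
      have c4 : r 1 < r 2 := h4b 1
      have c5 : r 0 < l 2 := h5 0
      have c6 : 2*δ ≤ r 2 - l 2 := h7 2
      have E : Bf δ l r 2 = max (max ((max (max (Bf δ l r 0 + δ) (ibase δ (l 2))) (ibase δ (r 1))) + δ)
          (ibase δ (l 3))) (ibase δ (r 2)) := rfl
      have g1 : Bf δ l r (1+1) = Bf δ l r 2 := rfl
      have g2 : r (1+1) = r 2 := rfl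
      omega
    | (m+2) =>
      have hIH : Bf δ l r (m+1) ≤ max (r (m+1) - δ - 1) (r m + δ - 1) := IH m (by omega)
      have bl3 := ibase_le δ (l (m+3)) hδ
      have br2 := ibase_le δ (r (m+2)) hδ
      have bl4 := ibase_le δ (l (m+4)) hδ
      have br3 := ibase_le δ (r (m+3)) hδ
      have c1 : l (m+3) ≤ r (m+2) := h4a (m+2)
      have c2 : l (m+4) ≤ r (m+3) := h4a (m+3)
      have c3 : r (m+1) < r (m+2) := h4b (m+1)
      have c4 : r (m+2) < r (m+3) := h4b (m+2)
      have c5 : r m < l (m+2) := h5 m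
      have c6 : l (m+2) ≤ r (m+1) := h4a (m+1)
      have c7 : 2*δ ≤ r (m+2) - l (m+2) := h7 (m+2)
      have E : Bf δ l r (m+3) = max (max ((max (max (Bf δ l r (m+1) + δ) (ibase δ (l (m+3))))
          (ibase δ (r (m+2)))) + δ) (ibase δ (l (m+4)))) (ibase δ (r (m+3))) := rfl
      have egoal : Bf δ l r (m+2+1) = Bf δ l r (m+3) := rfl
      have eg2 : r (m+2+1) = r (m+3) := rfl
      omega

include hδ h4a h4b h5 h6 h7 in
lemma Bub' (k : ℕ) : Bf δ l r k ≤ r k + 2*δ := by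
  match k with
  | 0 =>
    have := Bub0 hδ h4a h6
    omega
  | (k+1) =>
    have := Bub hδ h4a h4b h5 h6 h7 k
    have := h4b k
    omega

include hδ h4a h4b h5 h6 h7 in
lemma Aub (k : ℕ) : Af δ l r k ≤ l k + 2*δ := by
  match k with
  | 0 =>
    have := ibase_le δ (l 0) hδ
    have E : Af δ l r 0 = ibase δ (l 0) := rfl
    omega
  | 1 =>
    have := ibase_le δ (l 0) hδ
    have := ibase_le δ (l 1) hδ
    have c : l 0 < l 1 := h6 0
    have E : Af δ l r 1 = max (ibase δ (l 0)) (ibase δ (l 1)) := rfl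
    omega
  | (k+2) =>
    have bl : ibase δ (l (k+2)) ≤ l (k+2) - δ - 1 := ibase_le δ (l (k+2)) hδ
    have E : Af δ l r (k+2) = max (Bf δ l r k + δ) (ibase δ (l (k+2))) := rfl
    match k with
    | 0 =>
      have h0 := Bub0 hδ h4a h6
      have c5 : r 0 < l 2 := h5 0
      have E0 : Af δ l r 2 = max (Bf δ l r 0 + δ) (ibase δ (l 2)) := rfl
      have bl' : ibase δ (l 2) ≤ l 2 - δ - 1 := ibase_le δ (l 2) hδ
      have g1 : l (0+2) = l 2 := rfl
      have g2 : Af δ l r (0+2) = Af δ l r 2 := rfl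
      omega
    | (m+1) =>
      have hB := Bub hδ h4a h4b h5 h6 h7 m
      have c1 : r (m+1) < l (m+3) := h5 (m+1)
      have c2 : l (m+2) < l (m+3) := h6 (m+2)
      have c3 : r m < l (m+2) := h5 m
      have E1 : Af δ l r (m+3) = max (Bf δ l r (m+1) + δ) (ibase δ (l (m+3))) := rfl
      have eg : Af δ l r (m+1+2) = Af δ l r (m+3) := rfl
      have eg2 : l (m+1+2) = l (m+3) := rfl
      have bl' : ibase δ (l (m+3)) ≤ l (m+3) - δ - 1 := ibase_le δ (l (m+3)) hδ
      omega

end ABlemmas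


/-- The interval graph of a family `ℐ` of discrete intervals (an interval is encoded as a
pair `I : ℤ × ℤ` representing `Set.Icc I.1 I.2`): two intervals are adjacent iff they are
distinct and intersect. -/
def intervalGraph (ℐ : Set (ℤ × ℤ)) : SimpleGraph ℐ :=
  SimpleGraph.fromRel
    (fun I J => (Set.Icc I.1.1 I.1.2 ∩ Set.Icc J.1.1 J.1.2).Nonempty)

/-- `x` is an endpoint of some interval of the family `ℐ`. -/
def IsEndpoint (ℐ : Set (ℤ × ℤ)) (x : ℤ) : Prop :=
  ∃ I ∈ ℐ, x = I.1 ∨ x = I.2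

/-- Let `ℐ` be a nonempty connected family of discrete intervals contained in
`[a,b]` with `a` and `b` covered, and let `δ > 0` satisfy `δ ≤ ⌊Δ/2⌋` where `Δ` is the
minimal length of an interval in `ℐ` (equivalently, `2δ ≤ I.2 - I.1` for every `I ∈ ℐ`).
Then there is a subset `ℐ' ⊆ ℐ` with connected interval graph covering every point of
`[a,b]` exactly once or twice, together with a monotone map `ι` from the endpoints of `ℐ'`
into `δℤ`, moving every endpoint by at most `2δ`, sending intersecting intervals of `ℐ'`
to intersecting image intervals, and such that every integer lies in at most two of the
image intervals `[ι I.1, ι I.2]`, `I ∈ ℐ'`. -/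
theorem exists_connected_subfamily_and_rounding
    (a b : ℤ) (hab : a ≤ b) (ℐ : Set (ℤ × ℤ)) (hne : ℐ.Nonempty)
    (hproper : ∀ I ∈ ℐ, I.1 ≤ I.2)
    (hsub : ∀ I ∈ ℐ, Set.Icc I.1 I.2 ⊆ Set.Icc a b)
    (hconn : (intervalGraph ℐ).Connected)
    (ha : ∃ I ∈ ℐ, a ∈ Set.Icc I.1 I.2)
    (hb : ∃ I ∈ ℐ, b ∈ Set.Icc I.1 I.2)
    (δ : ℤ) (hδ : 0 < δ)
    (hΔ : ∀ I ∈ ℐ, 2 * δ ≤ I.2 - I.1) :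
    ∃ ℐ' ⊆ ℐ, (intervalGraph ℐ').Connected ∧
      (∀ k ∈ Set.Icc a b,
        (∃ I ∈ ℐ', k ∈ Set.Icc I.1 I.2) ∧
        (∀ I ∈ ℐ', ∀ J ∈ ℐ', ∀ K ∈ ℐ',
          k ∈ Set.Icc I.1 I.2 → k ∈ Set.Icc J.1 J.2 → k ∈ Set.Icc K.1 K.2 →
          I = J ∨ I = K ∨ J = K)) ∧
      ∃ ι : ℤ → ℤ,
        -- `ι` maps endpoints into `δℤ = O`, moving each point by at most `2δ`
        (∀ x, IsEndpoint ℐ' x → δ ∣ ι x ∧ |x - ι x| ≤ 2 * δ) ∧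
        -- `ι` is monotone on endpoints
        (∀ x y, IsEndpoint ℐ' x → IsEndpoint ℐ' y → x ≤ y → ι x ≤ ι y) ∧
        -- in particular, intersecting intervals of `ℐ'` have intersecting images
        (∀ I ∈ ℐ', ∀ J ∈ ℐ',
          (Set.Icc I.1 I.2 ∩ Set.Icc J.1 J.2).Nonempty →
          (Set.Icc (ι I.1) (ι I.2) ∩ Set.Icc (ι J.1) (ι J.2)).Nonempty) ∧
        -- every integer lies in at most two of the image intervals
        (∀ k : ℤ, ∀ I ∈ ℐ', ∀ J ∈ ℐ', ∀ K ∈ ℐ',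
          k ∈ Set.Icc (ι I.1) (ι I.2) → k ∈ Set.Icc (ι J.1) (ι J.2) →
          k ∈ Set.Icc (ι K.1) (ι K.2) →
          Set.Icc (ι I.1) (ι I.2) = Set.Icc (ι J.1) (ι J.2) ∨
          Set.Icc (ι I.1) (ι I.2) = Set.Icc (ι K.1) (ι K.2) ∨
          Set.Icc (ι J.1) (ι J.2) = Set.Icc (ι K.1) (ι K.2)) := by
  classical
  -- every interval's right endpoint is at most b
  have hub : ∀ K, K ∈ ℐ → K.2 ≤ b := fun K hK =>
    ((hsub K hK) (Set.mem_Icc.mpr ⟨hproper K hK, le_refl _⟩)).2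
  -- crossing lemma along a walk
  have cross : ∀ t : ℤ, ∀ u v : ↥ℐ, (intervalGraph ℐ).Walk u v → u.1.2 ≤ t → t < v.1.2 →
      ∃ J, J ∈ ℐ ∧ J.1 ≤ t ∧ t < J.2 := by
    intro t u v w
    induction w with
    | nil =>
      intro h1 h2
      exact absurd (h1.trans_lt h2) (lt_irrefl _)
    | @cons p q v' hadj w' ih =>
      intro h1 h2
      by_cases hc : q.1.2 ≤ t
      · exact ih hc h2
      · push_neg at hc
        simp only [intervalGraph, SimpleGraph.fromRel_adj] at hadj
        obtain ⟨hne', hrel | hrel⟩ := hadj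
        · obtain ⟨z, hz1, hz2⟩ := hrel
          exact ⟨q.1, q.2, le_trans (Set.mem_Icc.mp hz2).1 (le_trans (Set.mem_Icc.mp hz1).2 h1), hc⟩
        · obtain ⟨z, hz1, hz2⟩ := hrel
          exact ⟨q.1, q.2, le_trans (Set.mem_Icc.mp hz1).1 (le_trans (Set.mem_Icc.mp hz2).2 h1), hc⟩
  -- greedy step
  have step : ∀ I, I ∈ ℐ → I.2 < b →
      ∃ J, J ∈ ℐ ∧ J.1 ≤ I.2 ∧ I.2 < J.2 ∧ ∀ K, K ∈ ℐ → K.1 ≤ I.2 → K.2 ≤ J.2 := by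
    intro I hI hIb2
    obtain ⟨Ib, hIbm, hIbc⟩ := hb
    obtain ⟨w⟩ := hconn.preconnected ⟨I, hI⟩ ⟨Ib, hIbm⟩
    obtain ⟨J0, hJ0m, hJ0l, hJ0r⟩ := cross I.2 ⟨I, hI⟩ ⟨Ib, hIbm⟩ w (le_refl _)
      (lt_of_lt_of_le hIb2 (Set.mem_Icc.mp hIbc).2)
    have hbdd : ∃ q : ℤ, ∀ z : ℤ, (∃ K, K ∈ ℐ ∧ K.1 ≤ I.2 ∧ K.2 = z) → z ≤ q := by
      refine ⟨b, ?_⟩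
      rintro z ⟨K, hK, _, rfl⟩
      exact hub K hK
    have hinh : ∃ z : ℤ, ∃ K, K ∈ ℐ ∧ K.1 ≤ I.2 ∧ K.2 = z := ⟨J0.2, J0, hJ0m, hJ0l, rfl⟩
    obtain ⟨v, hvP, hvmax⟩ := Int.exists_greatest_of_bdd hbdd hinh
    obtain ⟨K0, hK0m, hK0l, hK0e⟩ := hvP
    refine ⟨K0, hK0m, hK0l, ?_, ?_⟩
    · have := hvmax J0.2 ⟨J0, hJ0m, hJ0l, rfl⟩
      omega
    · intro K hK hKl
      have := hvmax K.2 ⟨K, hK, hKl, rfl⟩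
      omega
  -- chain existence
  have chain : ∀ m : ℕ, ∀ I, I ∈ ℐ → (b - I.2).toNat ≤ m →
      ∃ n : ℕ, ∃ c : ℕ → ℤ × ℤ, c 0 = I ∧ (∀ k, k ≤ n → c k ∈ ℐ) ∧ b ≤ (c n).2 ∧
        (∀ k, k < n → (c (k+1)).1 ≤ (c k).2 ∧ (c k).2 < (c (k+1)).2 ∧
          ∀ K, K ∈ ℐ → K.1 ≤ (c k).2 → K.2 ≤ (c (k+1)).2) := by
    intro m
    induction m with
    | zero =>
      intro I hI h0
      exact ⟨0, fun _ => I, rfl, fun k _ => hI, by show b ≤ I.2; omega, fun k hk => absurd hk (Nat.not_lt_zero k)⟩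
    | succ m ih =>
      intro I hI hm
      by_cases hbI : b ≤ I.2
      · exact ⟨0, fun _ => I, rfl, fun k _ => hI, by show b ≤ I.2; omega, fun k hk => absurd hk (Nat.not_lt_zero k)⟩
      · push_neg at hbI
        obtain ⟨J, hJ, hJl, hJr, hJmax⟩ := step I hI hbI
        obtain ⟨n, c, hc0, hcm, hcb, hcs⟩ := ih J hJ (by omega)
        refine ⟨n+1, fun k => Nat.casesOn k I c, rfl, ?_, hcb, ?_⟩
        · intro k hk
          cases k with
          | zero => exact hI
          | succ k => exact hcm k (by omega)
        · intro k hk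
          cases k with
          | zero =>
            show (c 0).1 ≤ I.2 ∧ I.2 < (c 0).2 ∧ ∀ K, K ∈ ℐ → K.1 ≤ I.2 → K.2 ≤ (c 0).2
            rw [hc0]
            exact ⟨hJl, hJr, hJmax⟩
          | succ k =>
            show (c (k+1)).1 ≤ (c k).2 ∧ (c k).2 < (c (k+1)).2 ∧
              ∀ K, K ∈ ℐ → K.1 ≤ (c k).2 → K.2 ≤ (c (k+1)).2
            exact hcs k (by omega)
  -- choose the initial interval: maximal right endpoint among intervals containing a
  have hbdd0 : ∃ q : ℤ, ∀ z : ℤ, (∃ I, I ∈ ℐ ∧ I.1 ≤ a ∧ a ≤ I.2 ∧ I.2 = z) → z ≤ q := by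
    refine ⟨b, ?_⟩
    rintro z ⟨K, hK, _, _, rfl⟩
    exact hub K hK
  have hinh0 : ∃ z : ℤ, ∃ I, I ∈ ℐ ∧ I.1 ≤ a ∧ a ≤ I.2 ∧ I.2 = z := by
    obtain ⟨I, hI, hIc⟩ := ha
    exact ⟨I.2, I, hI, (Set.mem_Icc.mp hIc).1, (Set.mem_Icc.mp hIc).2, rfl⟩
  obtain ⟨v0, hv0P, hv0max⟩ := Int.exists_greatest_of_bdd hbdd0 hinh0
  obtain ⟨I0, hI0m, hI0l, hI0r, hI0e⟩ := hv0P
  have hI0max : ∀ K, K ∈ ℐ → K.1 ≤ a → a ≤ K.2 → K.2 ≤ I0.2 := by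
    intro K hK h1 h2
    have := hv0max K.2 ⟨K, hK, h1, h2, rfl⟩
    omega
  obtain ⟨n, c, hc0, hcm, hcb, hcs⟩ := chain (b - I0.2).toNat I0 hI0m (le_refl _)
  -- wall property in the chain
  have hwall : ∀ k, k + 2 ≤ n → (c k).2 < (c (k+2)).1 := by
    intro k hk
    by_contra hcon
    push_neg at hcon
    have h1 := (hcs k (by omega)).2.2 (c (k+2)) (hcm (k+2) hk) hcon
    have h2 := (hcs (k+1) (by omega)).2.1
    have e2 : (c (k+1+1)).2 = (c (k+2)).2 := rfl
    omega
  have hl1 : 1 ≤ n → a < (c 1).1 := by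
    intro hn
    by_contra hcon
    push_neg at hcon
    have h2 := (hcs 0 hn).2.1
    have e1 : (c (0+1)).2 = (c 1).2 := rfl
    have ha2 : a ≤ (c 1).2 := by
      have : a ≤ I0.2 := hI0r
      rw [← hc0] at this
      omega
    have := hI0max (c 1) (hcm 1 hn) hcon ha2
    rw [← hc0] at *
    omega
  -- extended sequence
  set d : ℕ → ℤ × ℤ := fun k =>
    if k ≤ n then c k
    else ((c n).2 + 2*δ*((k - n : ℕ) : ℤ) - 2*δ, (c n).2 + 2*δ*((k - n : ℕ) : ℤ)) with hd
  have hdc : ∀ k, k ≤ n → d k = c k := by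
    intro k hk
    simp only [hd, if_pos hk]
  have hdt : ∀ k, n < k →
      d k = ((c n).2 + 2*δ*((k - n : ℕ) : ℤ) - 2*δ, (c n).2 + 2*δ*((k - n : ℕ) : ℤ)) := by
    intro k hk
    simp only [hd, if_neg (Nat.not_le.mpr hk)]
  set L : ℕ → ℤ := fun k => (d k).1 with hL
  set R : ℕ → ℤ := fun k => (d k).2 with hR
  have hdtail1 : ∀ k, n ≤ k → L (k+1) = R k := by
    intro k hk
    by_cases hkn : k ≤ n
    · have hkeq : k = n := le_antisymm hkn hk
      subst hkeq
      have e1 : d (k+1) = ((c k).2 + 2*δ*((k+1 - k : ℕ) : ℤ) - 2*δ, (c k).2 + 2*δ*((k+1 - k : ℕ) : ℤ)) :=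
        hdt (k+1) (by omega)
      have e2 : d k = c k := hdc k (le_refl _)
      have ec : ((k+1 - k : ℕ) : ℤ) = 1 := by omega
      show (d (k+1)).1 = (d k).2
      rw [e1, e2, ec]
      ring
    · push_neg at hkn
      have e1 := hdt (k+1) (by omega)
      have e2 := hdt k hkn
      have ec : ((k+1 - n : ℕ) : ℤ) = ((k - n : ℕ) : ℤ) + 1 := by omega
      show (d (k+1)).1 = (d k).2
      rw [e1, e2, ec]
      ring
  have hdtail2 : ∀ k, n ≤ k → R (k+1) = R k + 2*δ := by
    intro k hk
    by_cases hkn : k ≤ n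
    · have hkeq : k = n := le_antisymm hkn hk
      subst hkeq
      have e1 := hdt (k+1) (by omega)
      have e2 := hdc k (le_refl _)
      have ec : ((k+1 - k : ℕ) : ℤ) = 1 := by omega
      show (d (k+1)).2 = (d k).2 + 2*δ
      rw [e1, e2, ec]
      ring
    · push_neg at hkn
      have e1 := hdt (k+1) (by omega)
      have e2 := hdt k hkn
      have ec : ((k+1 - n : ℕ) : ℤ) = ((k - n : ℕ) : ℤ) + 1 := by omega
      show (d (k+1)).2 = (d k).2 + 2*δ
      rw [e1, e2, ec]
      ring
  -- the five structural hypotheses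
  have hH7 : ∀ k, 2*δ ≤ R k - L k := by
    intro k
    by_cases hk : k ≤ n
    · have e := hdc k hk
      show 2*δ ≤ (d k).2 - (d k).1
      rw [e]
      exact hΔ (c k) (hcm k hk)
    · push_neg at hk
      have e := hdt k hk
      show 2*δ ≤ (d k).2 - (d k).1
      rw [e]
      ring_nf
      omega
  have hH4a : ∀ k, L (k+1) ≤ R k := by
    intro k
    by_cases hk : k < n
    · have e1 := hdc (k+1) (by omega)
      have e2 := hdc k (by omega)
      show (d (k+1)).1 ≤ (d k).2
      rw [e1, e2]
      exact (hcs k hk).1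
    · push_neg at hk
      rw [hdtail1 k hk]
  have hH4b : ∀ k, R k < R (k+1) := by
    intro k
    by_cases hk : k < n
    · have e1 := hdc (k+1) (by omega)
      have e2 := hdc k (by omega)
      show (d k).2 < (d (k+1)).2
      rw [e1, e2]
      exact (hcs k hk).2.1
    · push_neg at hk
      rw [hdtail2 k hk]
      omega
  have hH5 : ∀ k, R k < L (k+2) := by
    intro k
    by_cases hk : k + 2 ≤ n
    · have e1 := hdc (k+2) hk
      have e2 := hdc k (by omega)
      show (d k).2 < (d (k+2)).1
      rw [e1, e2]
      exact hwall k hk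
    · push_neg at hk
      have h1 : L (k+1+1) = R (k+1) := hdtail1 (k+1) (by omega)
      have h2 := hH4b k
      have e : L (k+2) = L (k+1+1) := rfl
      omega
  have hH6 : ∀ k, L k < L (k+1) := by
    intro k
    by_cases hk : k + 1 ≤ n
    · cases k with
      | zero =>
        have e1 := hdc 0 (by omega)
        have e2 := hdc 1 hk
        show (d 0).1 < (d 1).1
        rw [e1, e2, hc0]
        exact lt_of_le_of_lt hI0l (hl1 hk)
      | succ k =>
        have e1 := hdc (k+1) (by omega)
        have e2 := hdc (k+2) hk
        have h1 : (c (k+1)).1 ≤ (c k).2 := (hcs k (by omega)).1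
        have h2 : (c k).2 < (c (k+2)).1 := hwall k hk
        show (d (k+1)).1 < (d (k+1+1)).1
        have e3 : (d (k+1+1)).1 = (d (k+2)).1 := rfl
        rw [e1, e3, e2]
        omega
    · push_neg at hk
      have h1 : L (k+1) = R k := hdtail1 k (by omega)
      have h2 := hH7 k
      omega
  -- order facts
  have hLmono : StrictMono L := strictMono_nat_of_lt_succ hH6
  have hRmono : StrictMono R := strictMono_nat_of_lt_succ hH4b
  have hsep : ∀ p q : ℕ, p + 2 ≤ q → R p < L q := fun p q h =>
    lt_of_lt_of_le (hH5 p) (hLmono.monotone h)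
  have hdinj : ∀ i j, d i = d j → i = j := by
    intro i j h
    have : R i = R j := by
      show (d i).2 = (d j).2
      rw [h]
    exact hRmono.injective this
  -- the subfamily
  set ℐ' : Set (ℤ × ℤ) := {I : ℤ × ℤ | ∃ k, k ≤ n ∧ d k = I} with hℐ'
  have hmem' : ∀ k, k ≤ n → d k ∈ ℐ' := fun k hk => ⟨k, hk, rfl⟩
  have hsub' : ℐ' ⊆ ℐ := by
    intro I hI
    obtain ⟨k, hk, he⟩ := hI
    rw [← he, hdc k hk]
    exact hcm k hk
  -- the rounding map
  set ι : ℤ → ℤ := fun x =>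
    if h : ∃ m, x = L m then Af δ L R h.choose
    else if h2 : ∃ m, x = R m then Bf δ L R h2.choose
    else 0 with hι
  have ι_l : ∀ k, ι (L k) = Af δ L R k := by
    intro k
    have hex : ∃ m, L k = L m := ⟨k, rfl⟩
    simp only [hι]
    rw [dif_pos hex]
    have hc2 := hex.choose_spec
    have : hex.choose = k := (hLmono.injective hc2.symm)
    rw [this]
  have hBf_eq : ∀ k, Bf δ L R k = max (Af δ L R (k+1)) (ibase δ (R k)) := by
    intro k
    match k with
    | 0 => rfl
    | (k+1) => rfl
  have ι_r : ∀ k, ι (R k) = Bf δ L R k := by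
    intro k
    by_cases hex : ∃ m, R k = L m
    · simp only [hι]
      rw [dif_pos hex]
      have hspec : R k = L hex.choose := hex.choose_spec
      have hm1 : hex.choose ≤ k + 1 := by
        by_contra hcon
        push_neg at hcon
        have := hsep k hex.choose (by omega)
        omega
      have hm2 : k + 1 ≤ hex.choose := by
        by_contra hcon
        push_neg at hcon
        have h1 : L (k+1) ≤ R k := hH4a k
        have h2 : L hex.choose < L (k+1) := hLmono hcon
        omega
      have hm : hex.choose = k + 1 := le_antisymm hm1 hm2
      have htie : R k = L (k+1) := by rw [hspec, hm]
      have hBA : Bf δ L R k = Af δ L R (k+1) := by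
        rw [hBf_eq k, htie]
        exact max_eq_left (A_ge_base (k+1))
      rw [hm, ← hBA]
    · simp only [hι]
      rw [dif_neg hex]
      have hex2 : ∃ m, R k = R m := ⟨k, rfl⟩
      rw [dif_pos hex2]
      have hc2 := hex2.choose_spec
      have : hex2.choose = k := (hRmono.injective hc2.symm)
      rw [this]
  -- endpoints of ℐ' come from the chain
  have hep : ∀ x, IsEndpoint ℐ' x → ∃ k, x = L k ∨ x = R k := by
    rintro x ⟨I, hI, hx⟩
    obtain ⟨k, hk, he⟩ := hI
    rcases hx with h | h
    · exact ⟨k, Or.inl (by rw [h, ← he])⟩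
    · exact ⟨k, Or.inr (by rw [h, ← he])⟩
  refine ⟨ℐ', hsub', ?_, ?_, ι, ?_, ?_, ?_, ?_⟩
  · -- connectivity
    have reach : ∀ k, ∀ hk : k ≤ n,
        (intervalGraph ℐ').Reachable ⟨d k, hmem' k hk⟩ ⟨d 0, hmem' 0 (Nat.zero_le n)⟩ := by
      intro k
      induction k with
      | zero => intro _; rfl
      | succ k ih =>
        intro hk
        have hk' : k ≤ n := by omega
        have hAdj : (intervalGraph ℐ').Adj ⟨d (k+1), hmem' (k+1) hk⟩ ⟨d k, hmem' k hk'⟩ := by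
          simp only [intervalGraph, SimpleGraph.fromRel_adj]
          constructor
          · intro hcon
            have he : d (k+1) = d k := congrArg Subtype.val hcon
            have := hdinj _ _ he
            omega
          · left
            refine ⟨L (k+1), ?_, ?_⟩ <;> rw [Set.mem_Icc]
            · exact ⟨le_refl _, le_trans (hH4a k) (le_of_lt (hH4b k))⟩
            · exact ⟨le_of_lt (hH6 k), hH4a k⟩
        exact hAdj.reachable.trans (ih hk')
    rw [SimpleGraph.connected_iff]
    refine ⟨?_, ⟨⟨d 0, hmem' 0 (Nat.zero_le n)⟩⟩⟩
    · intro u v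
      obtain ⟨i, hi, hei⟩ := u.2
      obtain ⟨j, hj, hej⟩ := v.2
      have hu : u = ⟨d i, hmem' i hi⟩ := Subtype.ext hei.symm
      have hv : v = ⟨d j, hmem' j hj⟩ := Subtype.ext hej.symm
      rw [hu, hv]
      exact (reach i hi).trans (reach j hj).symm
  · -- coverage with multiplicity at most two
    intro z hz
    rw [Set.mem_Icc] at hz
    have cov : ∀ k : ℕ, ∀ x : ℤ, a ≤ x → x ≤ R k → ∃ j, j ≤ k ∧ L j ≤ x ∧ x ≤ R j := by
      intro k
      induction k with
      | zero =>
        intro x hax hx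
        refine ⟨0, le_refl _, ?_, hx⟩
        have e0 : d 0 = c 0 := hdc 0 (Nat.zero_le n)
        show (d 0).1 ≤ x
        rw [e0, hc0]
        exact le_trans hI0l hax
      | succ k ih =>
        intro x hax hx
        by_cases hc : x ≤ R k
        · obtain ⟨j, h1, h2, h3⟩ := ih x hax hc
          exact ⟨j, by omega, h2, h3⟩
        · push_neg at hc
          exact ⟨k+1, le_refl _, le_trans (hH4a k) hc.le, hx⟩
    constructor
    · have hzn : z ≤ R n := by
        have e : d n = c n := hdc n (le_refl _)
        show z ≤ (d n).2
        rw [e]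
        omega
      obtain ⟨j, hj, h2, h3⟩ := cov n z hz.1 hzn
      exact ⟨d j, hmem' j hj, Set.mem_Icc.mpr ⟨h2, h3⟩⟩
    · intro I hI J hJ K hK h1 h2 h3
      by_cases e1 : I = J
      · exact Or.inl e1
      by_cases e2 : I = K
      · exact Or.inr (Or.inl e2)
      by_cases e3 : J = K
      · exact Or.inr (Or.inr e3)
      exfalso
      obtain ⟨i, hi, hei⟩ := hI
      obtain ⟨j, hj, hej⟩ := hJ
      obtain ⟨k, hk, hek⟩ := hK
      have d1 : i ≠ j := fun h => e1 (by rw [← hei, ← hej, h])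
      have d2 : i ≠ k := fun h => e2 (by rw [← hei, ← hek, h])
      have d3 : j ≠ k := fun h => e3 (by rw [← hej, ← hek, h])
      rw [← hei] at h1
      rw [← hej] at h2
      rw [← hek] at h3
      obtain ⟨hi1, hi2⟩ := Set.mem_Icc.mp h1
      obtain ⟨hj1, hj2⟩ := Set.mem_Icc.mp h2
      obtain ⟨hk1, hk2⟩ := Set.mem_Icc.mp h3
      have hcase : i+2 ≤ j ∨ j+2 ≤ i ∨ i+2 ≤ k ∨ k+2 ≤ i ∨ j+2 ≤ k ∨ k+2 ≤ j := by omega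
      rcases hcase with hc | hc | hc | hc | hc | hc
      · have := hsep i j hc; simp only [hL, hR] at *; omega
      · have := hsep j i hc; simp only [hL, hR] at *; omega
      · have := hsep i k hc; simp only [hL, hR] at *; omega
      · have := hsep k i hc; simp only [hL, hR] at *; omega
      · have := hsep j k hc; simp only [hL, hR] at *; omega
      · have := hsep k j hc; simp only [hL, hR] at *; omega
  · -- ι maps endpoints into δℤ, moving by at most 2δ
    intro x hx
    obtain ⟨k, hxe⟩ := hep x hx
    rcases hxe with rfl | rfl
    · rw [ι_l k]
      refine ⟨Advd k, ?_⟩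
      have h1 := Alb (l := L) (r := R) hδ k
      have h2 := Aub hδ hH4a hH4b hH5 hH6 hH7 k
      rw [abs_le]
      omega
    · rw [ι_r k]
      refine ⟨Bdvd k, ?_⟩
      have h1 := Blb (l := L) (r := R) hδ k
      have h2 := Bub' hδ hH4a hH4b hH5 hH6 hH7 k
      rw [abs_le]
      omega
  · -- monotonicity on endpoints
    intro x y hx hy hxy
    obtain ⟨i, hxe⟩ := hep x hx
    obtain ⟨j, hye⟩ := hep y hy
    rcases hxe with rfl | rfl <;> rcases hye with rfl | rfl
    · rw [ι_l i, ι_l j]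
      have hij : i ≤ j := by
        by_contra hcon
        push_neg at hcon
        have := hLmono hcon
        omega
      exact Amono hδ hij
    · rw [ι_l i, ι_r j]
      have hij : i ≤ j + 1 := by
        by_contra hcon
        push_neg at hcon
        have := hsep j i (by omega)
        omega
      exact le_trans (Amono hδ hij) (AB j)
    · by_cases hc : i + 2 ≤ j
      · rw [ι_r i, ι_l j]
        have h1 := BA (δ := δ) (l := L) (r := R) i
        have h2 := Amono (l := L) (r := R) hδ hc
        omega
      · have h1 : L j ≤ L (i+1) := hLmono.monotone (by omega)
        have h2 : L (i+1) ≤ R i := hH4a i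
        have : R i = L j := le_antisymm hxy (by omega)
        rw [this]
    · rw [ι_r i, ι_r j]
      have hij : i ≤ j := by
        by_contra hcon
        push_neg at hcon
        have := hRmono hcon
        omega
      exact Bmono hδ hij
  · -- intersecting intervals have intersecting images
    intro I hI J hJ hIJ
    obtain ⟨i, hi, hei⟩ := hI
    obtain ⟨j, hj, hej⟩ := hJ
    have eI1 : ι I.1 = Af δ L R i := by rw [← hei]; exact ι_l i
    have eI2 : ι I.2 = Bf δ L R i := by rw [← hei]; exact ι_r i
    have eJ1 : ι J.1 = Af δ L R j := by rw [← hej]; exact ι_l j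
    have eJ2 : ι J.2 = Bf δ L R j := by rw [← hej]; exact ι_r j
    rw [eI1, eI2, eJ1, eJ2]
    obtain ⟨z, hzI, hzJ⟩ := hIJ
    rw [← hei] at hzI
    rw [← hej] at hzJ
    obtain ⟨hzi1, hzi2⟩ := Set.mem_Icc.mp hzI
    obtain ⟨hzj1, hzj2⟩ := Set.mem_Icc.mp hzJ
    have hji : j ≤ i + 1 := by
      by_contra hcon
      push_neg at hcon
      have := hsep i j (by omega)
      simp only [hL, hR] at *
      omega
    have hij : i ≤ j + 1 := by
      by_contra hcon
      push_neg at hcon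
      have := hsep j i (by omega)
      simp only [hL, hR] at *
      omega
    have f1 : Af δ L R i ≤ Bf δ L R i := AleB hδ i
    have f2 : Af δ L R j ≤ Bf δ L R j := AleB hδ j
    have f3 : Af δ L R j ≤ Bf δ L R i := le_trans (Amono hδ hji) (AB i)
    have f4 : Af δ L R i ≤ Bf δ L R j := le_trans (Amono hδ hij) (AB j)
    refine ⟨max (Af δ L R i) (Af δ L R j), ?_⟩
    rw [Set.mem_inter_iff, Set.mem_Icc, Set.mem_Icc]
    omega
  · -- at most two image intervals through any point
    intro z I hI J hJ K hK h1 h2 h3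
    obtain ⟨i, hi, hei⟩ := hI
    obtain ⟨j, hj, hej⟩ := hJ
    obtain ⟨k, hk, hek⟩ := hK
    by_cases e1 : I = J
    · exact Or.inl (by rw [e1])
    by_cases e2 : I = K
    · exact Or.inr (Or.inl (by rw [e2]))
    by_cases e3 : J = K
    · exact Or.inr (Or.inr (by rw [e3]))
    exfalso
    have d1 : i ≠ j := fun h => e1 (by rw [← hei, ← hej, h])
    have d2 : i ≠ k := fun h => e2 (by rw [← hei, ← hek, h])
    have d3 : j ≠ k := fun h => e3 (by rw [← hej, ← hek, h])
    have eI1 : ι I.1 = Af δ L R i := by rw [← hei]; exact ι_l i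
    have eI2 : ι I.2 = Bf δ L R i := by rw [← hei]; exact ι_r i
    have eJ1 : ι J.1 = Af δ L R j := by rw [← hej]; exact ι_l j
    have eJ2 : ι J.2 = Bf δ L R j := by rw [← hej]; exact ι_r j
    have eK1 : ι K.1 = Af δ L R k := by rw [← hek]; exact ι_l k
    have eK2 : ι K.2 = Bf δ L R k := by rw [← hek]; exact ι_r k
    rw [eI1, eI2, Set.mem_Icc] at h1
    rw [eJ1, eJ2, Set.mem_Icc] at h2
    rw [eK1, eK2, Set.mem_Icc] at h3
    have htrip : ∀ p q : ℕ, p + 2 ≤ q → Bf δ L R p < Af δ L R q := by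
      intro p q h
      have h1' := BA (δ := δ) (l := L) (r := R) p
      have h2' := Amono (l := L) (r := R) hδ h
      omega
    have hcase : i+2 ≤ j ∨ j+2 ≤ i ∨ i+2 ≤ k ∨ k+2 ≤ i ∨ j+2 ≤ k ∨ k+2 ≤ j := by omega
    rcases hcase with hc | hc | hc | hc | hc | hc
    · have := htrip i j hc; omega
    · have := htrip j i hc; omega
    · have := htrip i k hc; omega
    · have := htrip k i hc; omega
    · have := htrip j k hc; omega
    · have := htrip k j hc; omega
end

section
/- Let a ≤ b be integers and let ℐ be a nonempty set of discrete intervals contained in [a,b] whose interval graph is connected, such that a belongs to some member of ℐ and b belongs to some member of ℐ. Then there exists a subset ℐ' ⊆ ℐ whose interval graph is connected and such that every integer of [a,b] is contained in exactly one or exactly two members of ℐ'. -/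
/-! Greedy covering: start with the member reaching farthest to the right among those
containing `a`; as long as `b` is not reached, append the member reaching farthest to the right
among those starting no later than the current right end (connectivity guarantees it goes
further). By the maximal choice at each step, the `(n+2)`-nd member starts strictly after the
`n`-th ends, so each point lies in at most two consecutive members of the chain. -/

lemma intervalGraph_adj {ℐ : Set (ℤ × ℤ)} {I J : ℐ} :
    (intervalGraph ℐ).Adj I J ↔
      I ≠ J ∧ (Set.Icc I.1.1 I.1.2 ∩ Set.Icc J.1.1 J.1.2).Nonempty := by
  rw [intervalGraph, SimpleGraph.fromRel_adj, Set.inter_comm (Set.Icc J.1.1 J.1.2), or_self]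

/-- A walk from a member ending at or before `c` to one ending after `c` must cross `c`. -/
lemma exists_mem_crossing {ℐ : Set (ℤ × ℤ)} (hconn : (intervalGraph ℐ).Connected)
    {I K : ℤ × ℤ} (hI : I ∈ ℐ) (hK : K ∈ ℐ) {c : ℤ} (hIc : I.2 ≤ c) (hcK : c < K.2) :
    ∃ J ∈ ℐ, J.1 ≤ c ∧ c < J.2 := by
  obtain ⟨p⟩ := hconn.preconnected ⟨I, hI⟩ ⟨K, hK⟩
  obtain ⟨d, -, hfst, hsnd⟩ := p.exists_boundary_dart {J | J.1.2 ≤ c} hIc (not_le.2 hcK)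
  obtain ⟨-, x, ⟨-, hx⟩, ⟨hx', -⟩⟩ := intervalGraph_adj.1 d.adj
  exact ⟨d.snd.1, d.snd.2, hx'.trans (hx.trans hfst), not_le.1 hsnd⟩

structure IsIntervalChain (I : ℕ → ℤ × ℤ) (N : ℕ) : Prop where
  left_le_right : ∀ n < N, (I (n + 1)).1 ≤ (I n).2
  right_lt_right : ∀ n < N, (I n).2 < (I (n + 1)).2
  right_lt_left : ∀ n, n + 2 ≤ N → (I n).2 < (I (n + 2)).1

namespace IsIntervalChain

variable {I : ℕ → ℤ × ℤ} {N : ℕ}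

lemma mono (h : IsIntervalChain I N) {M : ℕ} (hMN : M ≤ N) : IsIntervalChain I M :=
  ⟨fun n hn => h.left_le_right n (by omega), fun n hn => h.right_lt_right n (by omega),
    fun n hn => h.right_lt_left n (by omega)⟩

lemma right_le_right (h : IsIntervalChain I N) {i j : ℕ} (hij : i ≤ j) (hjN : j ≤ N) :
    (I i).2 ≤ (I j).2 := by
  induction j, hij using Nat.le_induction with
  | base => exact le_rfl
  | succ j _ ih => exact (ih (by omega)).trans (h.right_lt_right j (by omega)).le

lemma lt_add_two_of_mem (h : IsIntervalChain I N) {k : ℤ} {i j : ℕ} (hjN : j ≤ N)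
    (hki : k ∈ Set.Icc (I i).1 (I i).2) (hkj : k ∈ Set.Icc (I j).1 (I j).2) : j < i + 2 := by
  by_contra! hij
  have := h.right_le_right (show i ≤ j - 2 by omega) (by omega)
  have := h.right_lt_left (j - 2) (by omega)
  rw [show j - 2 + 2 = j by omega] at this
  linarith [hki.2, hkj.1]

lemma eq_or_eq_or_eq_of_mem (h : IsIntervalChain I N) {k : ℤ} {i j l : ℕ}
    (hi : i ≤ N) (hj : j ≤ N) (hl : l ≤ N) (hki : k ∈ Set.Icc (I i).1 (I i).2)
    (hkj : k ∈ Set.Icc (I j).1 (I j).2) (hkl : k ∈ Set.Icc (I l).1 (I l).2) :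
    I i = I j ∨ I i = I l ∨ I j = I l := by
  have := h.lt_add_two_of_mem hj hki hkj
  have := h.lt_add_two_of_mem hl hki hkl
  have := h.lt_add_two_of_mem hi hkj hki
  have := h.lt_add_two_of_mem hl hkj hkl
  have := h.lt_add_two_of_mem hi hkl hki
  have := h.lt_add_two_of_mem hj hkl hkj
  have : i = j ∨ i = l ∨ j = l := by omega
  rcases this with rfl | rfl | rfl <;> simp

lemma exists_mem_Icc (h : IsIntervalChain I N) {k : ℤ} (hk : k ∈ Set.Icc (I 0).1 (I N).2) :
    ∃ n ≤ N, k ∈ Set.Icc (I n).1 (I n).2 := by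
  induction N with
  | zero => exact ⟨0, le_rfl, hk⟩
  | succ N ih =>
    by_cases hkN : k ≤ (I N).2
    · obtain ⟨n, hn, hkn⟩ := ih (h.mono N.le_succ) ⟨hk.1, hkN⟩
      exact ⟨n, hn.trans N.le_succ, hkn⟩
    · exact ⟨N + 1, le_rfl, (h.left_le_right N N.lt_succ_self).trans (not_le.1 hkN).le, hk.2⟩

lemma connected (h : IsIntervalChain I N) (hproper : ∀ n ≤ N, (I n).1 ≤ (I n).2) :
    (intervalGraph (I '' Set.Iic N)).Connected := by
  have hreach : ∀ n (hn : n ≤ N), (intervalGraph (I '' Set.Iic N)).Reachable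
      ⟨I 0, 0, Nat.zero_le N, rfl⟩ ⟨I n, n, hn, rfl⟩ := by
    intro n hn
    induction n with
    | zero => rfl
    | succ n ih =>
      refine (ih (by omega)).trans (SimpleGraph.Adj.reachable (intervalGraph_adj.2 ⟨?_, ?_⟩))
      · exact fun hne => (h.right_lt_right n (by omega)).ne (congrArg (·.1.2) hne)
      · exact ⟨(I n).2, ⟨hproper n (by omega), le_rfl⟩,
          ⟨h.left_le_right n (by omega), (h.right_lt_right n (by omega)).le⟩⟩
  refine (SimpleGraph.connected_iff _).2 ⟨fun u v => ?_, ⟨⟨I 0, 0, Nat.zero_le N, rfl⟩⟩⟩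
  obtain ⟨_, m, hm, rfl⟩ := u
  obtain ⟨_, n, hn, rfl⟩ := v
  exact (hreach m hm).symm.trans (hreach n hn)

end IsIntervalChain

lemma exists_farthest {ℐ : Set (ℤ × ℤ)} {b : ℤ} (hright : ∀ J ∈ ℐ, J.2 ≤ b) {t : ℤ}
    (ht : ∃ J ∈ ℐ, J.1 ≤ t) : ∃ J ∈ ℐ, J.1 ≤ t ∧ ∀ K ∈ ℐ, K.1 ≤ t → K.2 ≤ J.2 := by
  obtain ⟨J₀, hJ₀, hJ₀t⟩ := ht
  obtain ⟨_, ⟨J, hJ, hJt, rfl⟩, hmax⟩ := Int.exists_greatest_of_bdd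
    (P := fun r => ∃ J ∈ ℐ, J.1 ≤ t ∧ J.2 = r)
    ⟨b, fun _ ⟨J, hJ, _, hr⟩ => hr ▸ hright J hJ⟩ ⟨J₀.2, J₀, hJ₀, hJ₀t, rfl⟩
  exact ⟨J, hJ, hJt, fun K hK hKt => hmax K.2 ⟨K, hK, hKt, rfl⟩⟩

theorem exists_isIntervalChain {ℐ : Set (ℤ × ℤ)} {a b : ℤ} (hright : ∀ J ∈ ℐ, J.2 ≤ b)
    (hconn : (intervalGraph ℐ).Connected) (ha : ∃ I ∈ ℐ, a ∈ Set.Icc I.1 I.2)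
    (hb : ∃ K ∈ ℐ, b ≤ K.2) :
    ∃ (I : ℕ → ℤ × ℤ) (N : ℕ), IsIntervalChain I N ∧ (∀ n ≤ N, I n ∈ ℐ) ∧
      (I 0).1 ≤ a ∧ b ≤ (I N).2 := by
  obtain ⟨Ia, hIa, hIa1, hIa2⟩ := ha
  obtain ⟨K, hK, hbK⟩ := hb
  choose! next hnext using fun t (ht : a ≤ t) =>
    exists_farthest hright ⟨Ia, hIa, hIa1.trans ht⟩
  -- `t n` is the right end of the `(n-1)`-st member of the chain, with `t 0 = a`.
  set t : ℕ → ℤ := fun n => (fun s => (next s).2)^[n] a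
  have ht_succ (n : ℕ) : t (n + 1) = (next (t n)).2 := Function.iterate_succ_apply' _ _ _
  have ha_le (n : ℕ) : a ≤ t n := by
    induction n with
    | zero => exact le_rfl
    | succ n ih =>
      exact hIa2.trans (ht_succ n ▸ (hnext _ ih).2.2 Ia hIa (hIa1.trans ih))
  have hcross (n : ℕ) (hb : t (n + 1) < b) : t (n + 1) < t (n + 2) := by
    obtain ⟨J, hJ, hJ1, hJ2⟩ := exists_mem_crossing hconn (hnext _ (ha_le n)).1 hK
      (ht_succ n).ge (hb.trans_le hbK)
    rw [ht_succ (n + 1)]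
    exact hJ2.trans_le ((hnext _ (ha_le _)).2.2 J hJ hJ1)
  have hreach : ∃ n, b ≤ t (n + 1) := by
    by_contra! hlt
    have hgrow (n : ℕ) : a + n ≤ t (n + 1) := by
      induction n with
      | zero => simpa using ha_le 1
      | succ n ih => push_cast; linarith [hcross n (hlt n)]
    linarith [hgrow (b - a).toNat, hlt (b - a).toNat, Int.self_le_toNat (b - a)]
  refine ⟨fun n => next (t n), Nat.find hreach,
    ⟨fun n hn => ?_, fun n hn => ?_, fun n hn => ?_⟩,
    fun n _ => (hnext _ (ha_le n)).1, (hnext a le_rfl).2.1, ?_⟩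
  · exact (ht_succ n).symm ▸ (hnext _ (ha_le _)).2.1
  · rw [← ht_succ, ← ht_succ]
    exact hcross n (not_le.1 (Nat.find_min hreach hn))
  · by_contra! hle
    have := (hnext _ (ha_le (n + 1))).2.2 _ (hnext _ (ha_le (n + 2))).1
      (hle.trans (ht_succ n).ge)
    rw [← ht_succ, ← ht_succ] at this
    exact (not_le_of_gt (hcross (n + 1) (not_le.1 (Nat.find_min hreach (by omega))))) this
  · exact (Nat.find_spec hreach).trans_eq (ht_succ _)

theorem exists_connected_subfamily_cover_once_or_twice_general
    (a b : ℤ) (ℐ : Set (ℤ × ℤ))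
    (hproper : ∀ I ∈ ℐ, I.1 ≤ I.2)
    (hsub : ∀ I ∈ ℐ, Set.Icc I.1 I.2 ⊆ Set.Icc a b)
    (hconn : (intervalGraph ℐ).Connected)
    (ha : ∃ I ∈ ℐ, a ∈ Set.Icc I.1 I.2)
    (hb : ∃ I ∈ ℐ, b ∈ Set.Icc I.1 I.2) :
    ∃ ℐ' ⊆ ℐ, (intervalGraph ℐ').Connected ∧
      ∀ k ∈ Set.Icc a b,
        (∃ I ∈ ℐ', k ∈ Set.Icc I.1 I.2) ∧
        (∀ I ∈ ℐ', ∀ J ∈ ℐ', ∀ K ∈ ℐ',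
          k ∈ Set.Icc I.1 I.2 → k ∈ Set.Icc J.1 J.2 → k ∈ Set.Icc K.1 K.2 →
          I = J ∨ I = K ∨ J = K) := by
  have hright : ∀ J ∈ ℐ, J.2 ≤ b := fun J hJ => (hsub J hJ ⟨hproper J hJ, le_rfl⟩).2
  obtain ⟨I, N, hI, hmem, haI, hbI⟩ :=
    exists_isIntervalChain hright hconn ha (hb.imp fun _ hK => ⟨hK.1, hK.2.2⟩)
  refine ⟨I '' Set.Iic N, Set.image_subset_iff.2 hmem,
    hI.connected fun n hn => hproper _ (hmem n hn), fun k hk => ⟨?_, ?_⟩⟩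
  · obtain ⟨n, hn, hkn⟩ := hI.exists_mem_Icc ⟨haI.trans hk.1, hk.2.trans hbI⟩
    exact ⟨I n, ⟨n, hn, rfl⟩, hkn⟩
  · rintro _ ⟨i, hi, rfl⟩ _ ⟨j, hj, rfl⟩ _ ⟨l, hl, rfl⟩
    exact hI.eq_or_eq_or_eq_of_mem hi hj hl

/-- If `ℐ` is a nonempty connected family of discrete intervals contained in
`[a,b]`, with `a` and `b` each covered by some member of `ℐ`, then there is a subset
`ℐ' ⊆ ℐ` whose interval graph is connected and such that every integer of `[a,b]` is
contained in exactly one or exactly two members of `ℐ'`. -/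
theorem exists_connected_subfamily_cover_once_or_twice
    (a b : ℤ) (hab : a ≤ b) (ℐ : Set (ℤ × ℤ)) (hne : ℐ.Nonempty)
    (hproper : ∀ I ∈ ℐ, I.1 ≤ I.2)
    (hsub : ∀ I ∈ ℐ, Set.Icc I.1 I.2 ⊆ Set.Icc a b)
    (hconn : (intervalGraph ℐ).Connected)
    (ha : ∃ I ∈ ℐ, a ∈ Set.Icc I.1 I.2)
    (hb : ∃ I ∈ ℐ, b ∈ Set.Icc I.1 I.2) :
    ∃ ℐ' ⊆ ℐ, (intervalGraph ℐ').Connected ∧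
      ∀ k ∈ Set.Icc a b,
        (∃ I ∈ ℐ', k ∈ Set.Icc I.1 I.2) ∧
        (∀ I ∈ ℐ', ∀ J ∈ ℐ', ∀ K ∈ ℐ',
          k ∈ Set.Icc I.1 I.2 → k ∈ Set.Icc J.1 J.2 → k ∈ Set.Icc K.1 K.2 →
          I = J ∨ I = K ∨ J = K) :=
  exists_connected_subfamily_cover_once_or_twice_general a b ℐ hproper hsub hconn ha hb
end

section
/- Let δ be a positive integer and let I_0, I_1, …, I_m be discrete intervals in ℤ, each of length at least 2δ, such that I_i ∩ I_{i+1} ≠ ∅ for 0 ≤ i < m, I_i ∩ I_j = ∅ whenever |i − j| ≥ 2, and both the left endpoints min(I_k) and the right endpoints max(I_k) are strictly increasing in k. Let E be the set of all endpoints of the intervals I_0, …, I_m. Then there exists a map ι : E → δℤ such that: (1) |x − ι(x)| ≤ 2δ for every x ∈ E; (2) ι is monotone, i.e. x ≤ y implies ι(x) ≤ ι(y) for x, y ∈ E, so that in particular the images [ι(min I_k), ι(max I_k)] of consecutive intervals intersect; (3) every integer is contained in at most two of the intervals [ι(min I_k), ι(max I_k)], 0 ≤ k ≤ m. -/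
open Finset

private def rN {n : ℕ} (b : Fin n → ℤ) (j : Fin n) (x : ℤ) : ℕ :=
  (univ.filter fun i => j ≤ i ∧ b i < x).card

private def rF {n : ℕ} (δ : ℤ) (b : Fin n → ℤ) (x : ℤ) : ℤ :=
  x / δ + ((univ.filter fun i => b i < x).sup fun j => (b j / δ + (rN b j x : ℤ) - x / δ).toNat : ℕ)

private lemma rF_le_div {n : ℕ} (δ : ℤ) (b : Fin n → ℤ) (x : ℤ) : x / δ ≤ rF δ b x := by
  unfold rF
  exact le_add_of_nonneg_right (Int.natCast_nonneg _)

private lemma rF_le_term {n : ℕ} (δ : ℤ) (b : Fin n → ℤ) (x : ℤ) (j : Fin n) (h : b j < x) :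
    b j / δ + (rN b j x : ℤ) ≤ rF δ b x := by
  have hj : j ∈ univ.filter fun i => b i < x := by simp [h]
  have h1 : ((b j / δ + (rN b j x : ℤ) - x / δ).toNat : ℕ) ≤
      (univ.filter fun i => b i < x).sup fun i => (b i / δ + (rN b i x : ℤ) - x / δ).toNat :=
    Finset.le_sup (f := fun i => (b i / δ + (rN b i x : ℤ) - x / δ).toNat) hj
  have h2 : (((b j / δ + (rN b j x : ℤ) - x / δ).toNat : ℕ) : ℤ) ≤
      (((univ.filter fun i => b i < x).sup fun i => (b i / δ + (rN b i x : ℤ) - x / δ).toNat : ℕ) : ℤ) :=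
    Nat.cast_le.2 h1
  have h3 := rF_le_div δ b x
  unfold rF at h3 ⊢
  rcases le_or_gt (b j / δ + (rN b j x : ℤ) - x / δ) 0 with h0 | h0
  · linarith
  · rw [Int.toNat_of_nonneg h0.le] at h2; linarith

private lemma rF_le_of {n : ℕ} (δ : ℤ) (b : Fin n → ℤ) (x z : ℤ)
    (h1 : x / δ ≤ z) (h2 : ∀ j, b j < x → b j / δ + (rN b j x : ℤ) ≤ z) :
    rF δ b x ≤ z := by
  rcases (univ.filter fun i => b i < x).eq_empty_or_nonempty with he | hne
  · unfold rF; rw [he, Finset.sup_empty]; simpa using h1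
  · obtain ⟨j, hjmem, hsup⟩ := Finset.exists_mem_eq_sup _ hne
      (fun j => (b j / δ + (rN b j x : ℤ) - x / δ).toNat)
    have hjx : b j < x := (Finset.mem_filter.1 hjmem).2
    have h4 := h2 j hjx
    unfold rF; rw [hsup]
    rcases le_or_gt (b j / δ + (rN b j x : ℤ) - x / δ) 0 with h0 | h0
    · rw [Int.toNat_of_nonpos h0]; simpa using h1
    · rw [Int.toNat_of_nonneg h0.le]; linarith

private theorem aux_round (δ : ℤ) (hδ : 0 < δ) (m : ℕ) (a b : Fin (m+1) → ℤ)
    (hlen : ∀ k, 2 * δ ≤ b k - a k)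
    (bmono : StrictMono b)
    (gap : ∀ i j : Fin (m+1), (i:ℕ) + 2 ≤ (j:ℕ) → b i < a j) :
    ∃ ι : ℤ → ℤ,
      (∀ x : ℤ, δ ∣ ι x ∧ |x - ι x| ≤ 2 * δ) ∧
      (∀ x y : ℤ, x ≤ y → ι x ≤ ι y) ∧
      (∀ i l : Fin (m+1), (i:ℕ) + 2 ≤ (l:ℕ) → ι (b i) < ι (a l)) := by
  classical
  -- two-step growth of right endpoints
  have step2 : ∀ i j : Fin (m+1), (i:ℕ) + 2 ≤ (j:ℕ) → b i + (2*δ+1) ≤ b j := by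
    intro i j hij
    have h1 := gap i j hij
    have h2 := hlen j
    linarith
  have chain : ∀ (t : ℕ) (i j : Fin (m+1)), (i:ℕ) + 2*t ≤ (j:ℕ) →
      b i + (t:ℤ) * (2*δ+1) ≤ b j := by
    intro t
    induction t with
    | zero =>
      intro i j h
      simpa using bmono.monotone (Fin.le_def.2 (by omega))
    | succ t ih =>
      intro i j h
      have hi2 : (i:ℕ) + 2 < m + 1 := by have := j.isLt; omega
      have h1 := step2 i ⟨(i:ℕ)+2, hi2⟩ (by simp)
      have h2 := ih ⟨(i:ℕ)+2, hi2⟩ j (by simp; omega)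
      push_cast at h2 ⊢
      linarith
  -- monotonicity
  have Pmono : ∀ x y : ℤ, x ≤ y → rF δ b x ≤ rF δ b y := by
    intro x y hxy
    apply rF_le_of
    · exact le_trans (Int.ediv_le_ediv hδ hxy) (rF_le_div δ b y)
    · intro j hj
      have hjy : b j < y := lt_of_lt_of_le hj hxy
      have hcard : rN b j x ≤ rN b j y := by
        apply Finset.card_le_card
        intro i hi
        simp only [Finset.mem_filter, Finset.mem_univ, true_and] at hi ⊢
        exact ⟨hi.1, hi.2.trans_le hxy⟩
      have h1 := rF_le_term δ b y j hjy
      have h2 : (rN b j x : ℤ) ≤ (rN b j y : ℤ) := Nat.cast_le.2 hcard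
      linarith
  -- lower bound on ι
  have P6 : ∀ x : ℤ, x - 2*δ ≤ δ * rF δ b x := by
    intro x
    have h1 := Int.mul_ediv_add_emod x δ
    have h2 := Int.emod_lt_of_pos x hδ
    have h4 : δ * (x/δ) ≤ δ * rF δ b x := mul_le_mul_of_nonneg_left (rF_le_div δ b x) hδ.le
    linarith
  -- upper bound on ι : the key estimate
  have P7 : ∀ x : ℤ, δ * rF δ b x ≤ x + 2*δ := by
    intro x
    have hx1 := Int.mul_ediv_add_emod x δ
    have hx2 := Int.emod_nonneg x (ne_of_gt hδ)
    rcases (univ.filter fun i => b i < x).eq_empty_or_nonempty with he | hne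
    · unfold rF
      rw [he, Finset.sup_empty]
      have : δ * (x/δ) ≤ x := by linarith
      simpa using by linarith
    · obtain ⟨j, hjmem, hsup⟩ := Finset.exists_mem_eq_sup _ hne
        (fun j => (b j / δ + (rN b j x : ℤ) - x / δ).toNat)
      have hjx : b j < x := (Finset.mem_filter.1 hjmem).2
      unfold rF
      rw [hsup]
      set T : Finset (Fin (m+1)) := univ.filter fun i => j ≤ i ∧ b i < x with hT
      have hNT : rN b j x = T.card := rfl
      have hjT : j ∈ T := by simp [hT, hjx]
      have hTne : T.Nonempty := ⟨j, hjT⟩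
      set jm := T.max' hTne with hjm
      have hjmT : jm ∈ T := T.max'_mem hTne
      have hjmx : b jm < x := by
        have := (Finset.mem_filter.1 hjmT).2
        exact this.2
      have hjjm : (j:ℕ) ≤ (jm:ℕ) := Fin.le_def.1 (T.le_max' j hjT)
      have hsub : T ⊆ Finset.Icc j jm := by
        intro i hi
        rw [Finset.mem_Icc]
        exact ⟨((Finset.mem_filter.1 hi).2).1, T.le_max' i hi⟩
      have hcard : rN b j x ≤ (jm:ℕ) + 1 - (j:ℕ) := by
        rw [hNT]
        calc T.card ≤ (Finset.Icc j jm).card := Finset.card_le_card hsub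
          _ = (jm:ℕ) + 1 - (j:ℕ) := by rw [Fin.card_Icc]
      have hN1 : 1 ≤ rN b j x := by rw [hNT]; exact Finset.card_pos.2 hTne
      set s : ℕ := (rN b j x - 1) / 2 with hs
      have hch := chain s j jm (by omega)
      have hq1 := Int.mul_ediv_add_emod (b j) δ
      have hq2 := Int.emod_nonneg (b j) (ne_of_gt hδ)
      rcases le_or_gt (b j / δ + (rN b j x : ℤ) - x / δ) 0 with h0 | h0
      · rw [Int.toNat_of_nonpos h0]
        have : δ * (x/δ) ≤ x := by linarith
        simpa using by linarith
      · rw [Int.toNat_of_nonneg h0.le]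
        have hpar : (rN b j x : ℤ) = 2*(s:ℤ)+1 ∨ (rN b j x : ℤ) = 2*(s:ℤ)+2 := by omega
        have hs0 : (0:ℤ) ≤ (s:ℤ) := Int.natCast_nonneg s
        have hq3 : δ * (b j / δ) ≤ b j := by linarith
        have e2 : (s:ℤ) * (2*δ+1) = 2*(δ*(s:ℤ)) + (s:ℤ) := by ring
        rcases hpar with hp | hp
        · have e1 : δ * (x/δ + (b j/δ + (rN b j x : ℤ) - x/δ)) =
              δ*(b j/δ) + 2*(δ*(s:ℤ)) + δ := by rw [hp]; ring
          linarith
        · have e1 : δ * (x/δ + (b j/δ + (rN b j x : ℤ) - x/δ)) =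
              δ*(b j/δ) + 2*(δ*(s:ℤ)) + 2*δ := by rw [hp]; ring
          linarith
  -- separation
  have Psep : ∀ i l : Fin (m+1), (i:ℕ) + 2 ≤ (l:ℕ) → rF δ b (b i) + 1 ≤ rF δ b (a l) := by
    intro i l hil
    have hbia : b i < a l := gap i l hil
    have hNi : 1 ≤ rN b i (a l) := by
      apply Finset.card_pos.2
      exact ⟨i, by simp [rN, hbia]⟩
    have h1 := rF_le_term δ b (a l) i hbia
    have hNi' : (1:ℤ) ≤ (rN b i (a l) : ℤ) := by exact_mod_cast hNi
    have key : rF δ b (b i) ≤ rF δ b (a l) - 1 := by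
      apply rF_le_of
      · linarith
      · intro j hj
        have hji : j < i := bmono.lt_iff_lt.mp hj
        have hnm : i ∉ (univ.filter fun i' => j ≤ i' ∧ b i' < b i) := by simp
        have hins : insert i (univ.filter fun i' => j ≤ i' ∧ b i' < b i) ⊆
            (univ.filter fun i' => j ≤ i' ∧ b i' < a l) := by
          intro i' hi'
          rcases Finset.mem_insert.1 hi' with rfl | hi'
          · simp only [Finset.mem_filter, Finset.mem_univ, true_and]
            exact ⟨hji.le, hbia⟩
          · simp only [Finset.mem_filter, Finset.mem_univ, true_and] at hi' ⊢
            exact ⟨hi'.1, hi'.2.trans hbia⟩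
        have hcard : rN b j (b i) + 1 ≤ rN b j (a l) := by
          have h2 := Finset.card_le_card hins
          rw [Finset.card_insert_of_notMem hnm] at h2
          exact h2
        have h2 := rF_le_term δ b (a l) j (hj.trans hbia)
        have hc' : (rN b j (b i) : ℤ) + 1 ≤ (rN b j (a l) : ℤ) := by exact_mod_cast hcard
        linarith
    linarith [key]
  refine ⟨fun x => δ * rF δ b x, fun x => ⟨dvd_mul_right δ _, ?_⟩,
    fun x y hxy => mul_le_mul_of_nonneg_left (Pmono x y hxy) hδ.le,
    fun i l hil => ?_⟩
  · show |x - δ * rF δ b x| ≤ 2 * δ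
    rw [abs_le]
    constructor
    · have := P7 x; linarith
    · have := P6 x; linarith
  · show δ * rF δ b (b i) < δ * rF δ b (a l)
    have h1 := Psep i l hil
    have h2 : δ * (rF δ b (b i) + 1) ≤ δ * rF δ b (a l) :=
      mul_le_mul_of_nonneg_left h1 hδ.le
    have h3 : δ * (rF δ b (b i) + 1) = δ * rF δ b (b i) + δ := by ring
    linarith



/-- Let `δ > 0` and let `I 0, …, I m` be discrete intervals in `ℤ` (encoded as
pairs, `I k` representing `Set.Icc (I k).1 (I k).2`), each of length at least `2δ`, with
consecutive intervals intersecting, intervals at index distance `≥ 2` disjoint, and both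
endpoint sequences strictly increasing.  Then there is a map `ι` defined on the set of
endpoints, taking values in `δℤ`, moving each endpoint by at most `2δ`, monotone (so that
in particular images of consecutive intervals intersect), and such that every integer is
contained in at most two of the image intervals `[ι (I k).1, ι (I k).2]`. -/
theorem exists_rounding_of_interval_path
    (δ : ℤ) (hδ : 0 < δ) (m : ℕ) (I : Fin (m + 1) → ℤ × ℤ)
    (hlen : ∀ k, 2 * δ ≤ (I k).2 - (I k).1)
    (hcons : ∀ k : Fin m,
      (Set.Icc (I k.castSucc).1 (I k.castSucc).2 ∩
        Set.Icc (I k.succ).1 (I k.succ).2).Nonempty)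
    (hdisj : ∀ i j : Fin (m + 1), (i : ℕ) + 2 ≤ (j : ℕ) →
      Set.Icc (I i).1 (I i).2 ∩ Set.Icc (I j).1 (I j).2 = ∅)
    (hmin : ∀ k : Fin m, (I k.castSucc).1 < (I k.succ).1)
    (hmax : ∀ k : Fin m, (I k.castSucc).2 < (I k.succ).2) :
    ∃ ι : ℤ → ℤ,
      -- `ι` maps endpoints into `δℤ`, moving each endpoint by at most `2δ`
      (∀ x, (∃ k, x = (I k).1 ∨ x = (I k).2) → δ ∣ ι x ∧ |x - ι x| ≤ 2 * δ) ∧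
      -- `ι` is monotone on endpoints
      (∀ x y, (∃ k, x = (I k).1 ∨ x = (I k).2) → (∃ k, y = (I k).1 ∨ y = (I k).2) →
        x ≤ y → ι x ≤ ι y) ∧
      -- in particular, the images of consecutive intervals intersect
      (∀ k : Fin m,
        (Set.Icc (ι (I k.castSucc).1) (ι (I k.castSucc).2) ∩
          Set.Icc (ι (I k.succ).1) (ι (I k.succ).2)).Nonempty) ∧
      -- every integer is contained in at most two of the image intervals
      (∀ n : ℤ, ∀ k₁ k₂ k₃ : Fin (m + 1),
        n ∈ Set.Icc (ι (I k₁).1) (ι (I k₁).2) →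
        n ∈ Set.Icc (ι (I k₂).1) (ι (I k₂).2) →
        n ∈ Set.Icc (ι (I k₃).1) (ι (I k₃).2) →
        Set.Icc (ι (I k₁).1) (ι (I k₁).2) = Set.Icc (ι (I k₂).1) (ι (I k₂).2) ∨
        Set.Icc (ι (I k₁).1) (ι (I k₁).2) = Set.Icc (ι (I k₃).1) (ι (I k₃).2) ∨
        Set.Icc (ι (I k₂).1) (ι (I k₂).2) = Set.Icc (ι (I k₃).1) (ι (I k₃).2)) := by
  classical
  have hab : ∀ k, (I k).1 ≤ (I k).2 := by
    intro k; have := hlen k; linarith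
  have amono : StrictMono (fun k : Fin (m+1) => (I k).1) :=
    Fin.strictMono_iff_lt_succ.2 hmin
  have bmono : StrictMono (fun k : Fin (m+1) => (I k).2) :=
    Fin.strictMono_iff_lt_succ.2 hmax
  have gap : ∀ i j : Fin (m+1), (i:ℕ) + 2 ≤ (j:ℕ) → (I i).2 < (I j).1 := by
    intro i j hij
    by_contra hcon
    push_neg at hcon
    have hij' : i ≤ j := Fin.le_def.2 (by omega)
    have hmem : (I j).1 ∈ Set.Icc (I i).1 (I i).2 ∩ Set.Icc (I j).1 (I j).2 :=
      ⟨⟨amono.monotone hij', hcon⟩, le_refl _, hab j⟩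
    rw [hdisj i j hij] at hmem
    exact hmem
  obtain ⟨ι, h1, h2, h3⟩ := aux_round δ hδ m (fun k => (I k).1) (fun k => (I k).2)
    (fun k => hlen k) bmono gap
  have hdisjim : ∀ (n : ℤ) (i l : Fin (m+1)), (i:ℕ) + 2 ≤ (l:ℕ) →
      n ∈ Set.Icc (ι (I i).1) (ι (I i).2) → n ∈ Set.Icc (ι (I l).1) (ι (I l).2) → False := by
    intro n i l hil hni hnl
    have hs := h3 i l hil
    have h1' := hni.2
    have h2' := hnl.1
    linarith
  refine ⟨ι, fun x _ => h1 x, fun x y _ _ hxy => h2 x y hxy, ?_, ?_⟩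
  · intro k
    obtain ⟨z, hz1, hz2⟩ := hcons k
    rw [Set.mem_Icc] at hz1 hz2
    exact ⟨ι z, ⟨⟨h2 _ _ hz1.1, h2 _ _ hz1.2⟩, ⟨h2 _ _ hz2.1, h2 _ _ hz2.2⟩⟩⟩
  · intro n k₁ k₂ k₃ hn1 hn2 hn3
    by_cases e12 : k₁ = k₂
    · left; rw [e12]
    by_cases e13 : k₁ = k₃
    · right; left; rw [e13]
    by_cases e23 : k₂ = k₃
    · right; right; rw [e23]
    exfalso
    have d12 : (k₁:ℕ) ≠ (k₂:ℕ) := fun h => e12 (Fin.ext h)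
    have d13 : (k₁:ℕ) ≠ (k₃:ℕ) := fun h => e13 (Fin.ext h)
    have d23 : (k₂:ℕ) ≠ (k₃:ℕ) := fun h => e23 (Fin.ext h)
    have hcases : ((k₁:ℕ) + 2 ≤ k₂) ∨ ((k₂:ℕ) + 2 ≤ k₁) ∨ ((k₁:ℕ) + 2 ≤ k₃) ∨
        ((k₃:ℕ) + 2 ≤ k₁) ∨ ((k₂:ℕ) + 2 ≤ k₃) ∨ ((k₃:ℕ) + 2 ≤ k₂) := by omega
    rcases hcases with h|h|h|h|h|h
    · exact hdisjim n k₁ k₂ h hn1 hn2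
    · exact hdisjim n k₂ k₁ h hn2 hn1
    · exact hdisjim n k₁ k₃ h hn1 hn3
    · exact hdisjim n k₃ k₁ h hn3 hn1
    · exact hdisjim n k₂ k₃ h hn2 hn3
    · exact hdisjim n k₃ k₂ h hn3 hn2
end

section
/- Let a ≤ b be integers and let I_0, …, I_m be a minimal bridging path for a, b. Then every integer k with a ≤ k ≤ b is contained in exactly one or exactly two of the intervals I_0, …, I_m. -/
/-- A bridging path for `a, b` (with `a ≤ b`): a finite sequence `I 0, …, I m` of discrete
intervals (encoded as pairs, `I k` representing `Set.Icc (I k).1 (I k).2`) contained in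
`[a,b]`, with consecutive intervals intersecting, `a ∈ I 0` and `b ∈ I m`. -/
def IsBridgingPath (a b : ℤ) (m : ℕ) (I : Fin (m + 1) → ℤ × ℤ) : Prop :=
  (∀ k, (I k).1 ≤ (I k).2) ∧
  (∀ k, Set.Icc (I k).1 (I k).2 ⊆ Set.Icc a b) ∧
  (∀ k : Fin m,
    (Set.Icc (I k.castSucc).1 (I k.castSucc).2 ∩
      Set.Icc (I k.succ).1 (I k.succ).2).Nonempty) ∧
  a ∈ Set.Icc (I 0).1 (I 0).2 ∧
  b ∈ Set.Icc (I (Fin.last m)).1 (I (Fin.last m)).2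

/-- A minimal bridging path: a bridging path such that every bridging path for `a, b`
all of whose terms belong to the set `{I 0, …, I m}` has at least `m + 1` terms. -/
def IsMinimalBridgingPath (a b : ℤ) (m : ℕ) (I : Fin (m + 1) → ℤ × ℤ) : Prop :=
  IsBridgingPath a b m I ∧
  ∀ (m' : ℕ) (J : Fin (m' + 1) → ℤ × ℤ), IsBridgingPath a b m' J →
    (∀ k, ∃ l, J k = I l) → m ≤ m'

/-- If `I 0, …, I m` is a minimal bridging path for `a, b`, then every
integer `k ∈ [a,b]` is contained in exactly one or exactly two of the intervals. -/
theorem minimalBridgingPath_covers_once_or_twice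
    (a b : ℤ) (hab : a ≤ b) (m : ℕ) (I : Fin (m + 1) → ℤ × ℤ)
    (hmin : IsMinimalBridgingPath a b m I) :
    ∀ k ∈ Set.Icc a b,
      (∃ i, k ∈ Set.Icc (I i).1 (I i).2) ∧
      (∀ i j l : Fin (m + 1),
        k ∈ Set.Icc (I i).1 (I i).2 → k ∈ Set.Icc (I j).1 (I j).2 →
        k ∈ Set.Icc (I l).1 (I l).2 → i = j ∨ i = l ∨ j = l) := by
  obtain ⟨⟨hle, hsub, hint, ha, hb⟩, hminle⟩ := hmin
  -- Key: two intervals sharing a point have indices within distance 1.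
  have key : ∀ (i j : Fin (m+1)) (x : ℤ),
      x ∈ Set.Icc (I i).1 (I i).2 → x ∈ Set.Icc (I j).1 (I j).2 →
      ¬ ((i:ℕ) + 2 ≤ (j:ℕ)) := by
    intro i j x hxi hxj hij
    set d := (j:ℕ) - (i:ℕ) - 1 with hd
    have hd1 : 1 ≤ d := by omega
    have hjm : (j:ℕ) ≤ m := Nat.lt_succ_iff.mp j.isLt
    have him' : (i:ℕ) + 1 ≤ m - d := by omega
    set m' := m - d with hm'
    have hJlt : ∀ t : Fin (m'+1), (if (t:ℕ) ≤ (i:ℕ) then (t:ℕ) else (t:ℕ) + d) < m + 1 := by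
      intro t; have := t.isLt; split <;> omega
    set J : Fin (m'+1) → ℤ × ℤ := fun t => I ⟨_, hJlt t⟩ with hJ
    have hJeq : ∀ (t : Fin (m'+1)) (s : Fin (m+1)),
        (if (t:ℕ) ≤ (i:ℕ) then (t:ℕ) else (t:ℕ) + d) = (s:ℕ) → J t = I s :=
      fun t s h => congrArg I (Fin.ext h)
    have hintN : ∀ s : ℕ, ∀ hs : s < m,
        (Set.Icc (I ⟨s, by omega⟩).1 (I ⟨s, by omega⟩).2 ∩
          Set.Icc (I ⟨s+1, by omega⟩).1 (I ⟨s+1, by omega⟩).2).Nonempty :=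
      fun s hs => hint ⟨s, hs⟩
    have hbr : IsBridgingPath a b m' J := by
      refine ⟨fun t => hle _, fun t => hsub _, ?_, ?_, ?_⟩
      · intro t
        have htlt := t.isLt
        by_cases h1 : (t:ℕ) + 1 ≤ (i:ℕ)
        · rw [hJeq t.castSucc ⟨(t:ℕ), by omega⟩
              (by simp only [Fin.coe_castSucc, Fin.val_succ]; split <;> omega),
             hJeq t.succ ⟨(t:ℕ)+1, by omega⟩
              (by simp only [Fin.coe_castSucc, Fin.val_succ]; split <;> omega)]
          exact hintN (t:ℕ) (by omega)
        · by_cases h2 : (t:ℕ) ≤ (i:ℕ)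
          · rw [hJeq t.castSucc i
                (by simp only [Fin.coe_castSucc, Fin.val_succ]; split <;> omega),
               hJeq t.succ j
                (by simp only [Fin.coe_castSucc, Fin.val_succ]; split <;> omega)]
            exact ⟨x, hxi, hxj⟩
          · rw [hJeq t.castSucc ⟨(t:ℕ)+d, by omega⟩
                (by simp only [Fin.coe_castSucc, Fin.val_succ]; split <;> omega),
               hJeq t.succ ⟨(t:ℕ)+d+1, by omega⟩
                (by simp only [Fin.coe_castSucc, Fin.val_succ]; split <;> omega)]
            exact hintN ((t:ℕ)+d) (by omega)
      · rw [hJeq 0 0 (by norm_num)]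
        exact ha
      · rw [hJeq (Fin.last m') (Fin.last m)
            (by simp only [Fin.val_last]; split <;> omega)]
        exact hb
    have := hminle m' J hbr (fun t => ⟨_, rfl⟩)
    omega
  -- Coverage
  have cover : ∀ (j : Fin (m+1)) (x : ℤ), a ≤ x → x ≤ (I j).2 →
      ∃ i, x ∈ Set.Icc (I i).1 (I i).2 := by
    intro j
    induction j using Fin.induction with
    | zero => intro x hax hx; exact ⟨0, ha.1.trans hax, hx⟩
    | succ t ih =>
      intro x hax hx
      by_cases h : (I t.succ).1 ≤ x
      · exact ⟨t.succ, h, hx⟩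
      · push_neg at h
        obtain ⟨y, hy1, hy2⟩ := hint t
        exact ih x hax (by have := hy1.2; have := hy2.1; omega)
  intro k hk
  constructor
  · exact cover (Fin.last m) k hk.1 (hk.2.trans hb.2)
  · intro i j l hki hkj hkl
    have h1 := key i j k hki hkj
    have h2 := key j i k hkj hki
    have h3 := key i l k hki hkl
    have h4 := key l i k hkl hki
    have h5 := key j l k hkj hkl
    have h6 := key l j k hkl hkj
    have : (i:ℕ) = (j:ℕ) ∨ (i:ℕ) = (l:ℕ) ∨ (j:ℕ) = (l:ℕ) := by omega
    rcases this with h | h | h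
    · exact Or.inl (Fin.ext h)
    · exact Or.inr (Or.inl (Fin.ext h))
    · exact Or.inr (Or.inr (Fin.ext h))
end

section
/- Let a ≤ b be integers and let I_0, …, I_m be a minimal bridging path for a, b with m ≥ 1. Then the left endpoints are strictly increasing and the right endpoints are strictly increasing: min(I_k) < min(I_{k+1}) and max(I_k) < max(I_{k+1}) for all 0 ≤ k < m. -/
namespace BridgeAux

/-- Index into `Fin (m+1)` from a natural number, clamping at `m`. -/
def idx (m n : ℕ) : Fin (m + 1) := ⟨min n m, Nat.lt_succ_of_le (Nat.min_le_right n m)⟩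

variable {a b : ℤ} {m : ℕ} {I : Fin (m + 1) → ℤ × ℤ}

/-- Left endpoints reindexed over ℕ. -/
def L (I : Fin (m + 1) → ℤ × ℤ) (n : ℕ) : ℤ := (I (idx m n)).1

/-- Right endpoints reindexed over ℕ. -/
def R (I : Fin (m + 1) → ℤ × ℤ) (n : ℕ) : ℤ := (I (idx m n)).2

lemma bp_lr (h : IsBridgingPath a b m I) (n : ℕ) : L I n ≤ R I n := h.1 _

lemma bp_aL (h : IsBridgingPath a b m I) (n : ℕ) : a ≤ L I n :=
  (h.2.1 _ ⟨le_refl _, bp_lr h n⟩).1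

lemma bp_Rb (h : IsBridgingPath a b m I) (n : ℕ) : R I n ≤ b :=
  (h.2.1 _ ⟨bp_lr h n, le_refl _⟩).2

lemma bp_ha (h : IsBridgingPath a b m I) : a ∈ Set.Icc (L I 0) (R I 0) := by
  have e : idx m 0 = 0 := Fin.ext (by simp [idx])
  unfold L R
  rw [e]
  exact h.2.2.2.1

lemma bp_hb (h : IsBridgingPath a b m I) : b ∈ Set.Icc (L I m) (R I m) := by
  have e : idx m m = Fin.last m := Fin.ext (by simp [idx, Fin.last])
  unfold L R
  rw [e]
  exact h.2.2.2.2

lemma bp_cons (h : IsBridgingPath a b m I) (n : ℕ) (hn : n < m) :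
    (Set.Icc (L I n) (R I n) ∩ Set.Icc (L I (n + 1)) (R I (n + 1))).Nonempty := by
  have e1 : idx m n = (⟨n, hn⟩ : Fin m).castSucc := Fin.ext (by simp [idx]; omega)
  have e2 : idx m (n + 1) = (⟨n, hn⟩ : Fin m).succ := Fin.ext (by simp [idx]; omega)
  unfold L R
  rw [e1, e2]
  exact h.2.2.1 _

/-- Key consequence of minimality: there is no strictly shorter bridging path through
(some of) the same intervals. -/
lemma key (hmin : IsMinimalBridgingPath a b m I) (m' : ℕ) (hm' : m' < m) (g : ℕ → ℕ)
    (ha : a ∈ Set.Icc (L I (g 0)) (R I (g 0)))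
    (hb : b ∈ Set.Icc (L I (g m')) (R I (g m')))
    (hint : ∀ i, i < m' →
      (Set.Icc (L I (g i)) (R I (g i)) ∩
        Set.Icc (L I (g (i + 1))) (R I (g (i + 1)))).Nonempty) :
    False := by
  refine absurd (hmin.2 m' (fun i => I (idx m (g i.val))) ?_
    (fun k => ⟨idx m (g k.val), rfl⟩)) (by omega)
  refine ⟨fun k => hmin.1.1 _, fun k => hmin.1.2.1 _, fun k => ?_, ?_, ?_⟩
  · simpa [L, R] using hint k.val k.isLt
  · simpa [L, R] using ha
  · simpa [L, R] using hb

/-- In a minimal bridging path, non-consecutive intervals are disjoint. -/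
lemma disj (hmin : IsMinimalBridgingPath a b m I) (p q : ℕ) (hpq : p + 2 ≤ q) (hqm : q ≤ m)
    (x : ℤ) (hxp : x ∈ Set.Icc (L I p) (R I p)) (hxq : x ∈ Set.Icc (L I q) (R I q)) :
    False := by
  have hB := hmin.1
  refine key hmin (m - (q - p - 1)) (by omega)
    (fun i => if i ≤ p then i else i + (q - p - 1)) ?_ ?_ ?_
  · have e : (if 0 ≤ p then 0 else 0 + (q - p - 1)) = 0 := by simp
    simpa only [e] using bp_ha hB
  · have e : (if m - (q - p - 1) ≤ p then m - (q - p - 1)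
        else m - (q - p - 1) + (q - p - 1)) = m := by split <;> omega
    simpa only [e] using bp_hb hB
  · intro i hi
    rcases lt_trichotomy i p with h | rfl | h
    · have e1 : (if i ≤ p then i else i + (q - p - 1)) = i := if_pos (by omega)
      have e2 : (if i + 1 ≤ p then i + 1 else i + 1 + (q - p - 1)) = i + 1 := if_pos (by omega)
      simpa only [e1, e2] using bp_cons hB i (by omega)
    · have e1 : (if i ≤ i then i else i + (q - i - 1)) = i := if_pos le_rfl
      have e2 : (if i + 1 ≤ i then i + 1 else i + 1 + (q - i - 1)) = q := by
        rw [if_neg (by omega)]; omega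
      simpa only [e1, e2] using ⟨x, hxp, hxq⟩
    · have e1 : (if i ≤ p then i else i + (q - p - 1)) = i + (q - p - 1) :=
        if_neg (by omega)
      have e2 : (if i + 1 ≤ p then i + 1 else i + 1 + (q - p - 1)) =
          i + (q - p - 1) + 1 := by rw [if_neg (by omega)]; omega
      simpa only [e1, e2] using bp_cons hB (i + (q - p - 1)) (by omega)

end BridgeAux

open BridgeAux in
/-- If `I 0, …, I m` is a minimal bridging path for `a, b` with `m ≥ 1`,
then the left endpoints and the right endpoints are strictly increasing. -/
theorem minimalBridgingPath_endpoints_strictMono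
    (a b : ℤ) (hab : a ≤ b) (m : ℕ) (hm : 1 ≤ m) (I : Fin (m + 1) → ℤ × ℤ)
    (hmin : IsMinimalBridgingPath a b m I) :
    ∀ k : Fin m,
      (I k.castSucc).1 < (I k.succ).1 ∧ (I k.castSucc).2 < (I k.succ).2 := by
  classical
  have hB := hmin.1
  -- strict monotonicity of left endpoints
  have hL : ∀ c, c < m → L I c < L I (c + 1) := by
    intro c hc
    by_contra hcon
    push_neg at hcon
    rcases Nat.eq_zero_or_pos c with rfl | hcpos
    · -- drop the first interval: `a ∈ I 1`
      have h1 : L I 1 ≤ a := le_trans hcon (Set.mem_Icc.mp (bp_ha hB)).1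
      refine key hmin (m - 1) (by omega) (fun i => i + 1) ?_ ?_ ?_
      · exact ⟨h1, le_trans (bp_aL hB 1) (bp_lr hB 1)⟩
      · have e : m - 1 + 1 = m := by omega
        simpa only [e] using bp_hb hB
      · intro i hi
        have e : i + 1 + 1 = (i + 1) + 1 := rfl
        simpa only [e] using bp_cons hB (i + 1) (by omega)
    · rcases le_or_gt (R I c) (R I (c + 1)) with hr | hr
      · -- I c ⊆ I (c+1), so I (c-1) meets I (c+1)
        obtain ⟨x, hx1, hx2⟩ := bp_cons hB (c - 1) (by omega)
        have e : c - 1 + 1 = c := by omega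
        rw [e] at hx2
        rw [Set.mem_Icc] at hx1 hx2
        exact disj hmin (c - 1) (c + 1) (by omega) (by omega) x
          (Set.mem_Icc.mpr ⟨hx1.1, hx1.2⟩)
          (Set.mem_Icc.mpr ⟨le_trans hcon hx2.1, le_trans hx2.2 hr⟩)
      · rcases eq_or_lt_of_le (Nat.succ_le_of_lt hc) with hceq | hclt
        · -- c + 1 = m : contradiction since b ≤ R (c+1) < R c ≤ b
          have h1 : b ≤ R I m := (Set.mem_Icc.mp (bp_hb hB)).2
          have h2 : R I c ≤ b := bp_Rb hB c
          have e : R I (c + 1) = R I m := by rw [show c + 1 = m from hceq]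
          omega
        · -- c + 1 < m : find the first j ≥ c+2 whose interval reaches back to I c
          have hPm : c + 2 ≤ m ∧ m ≤ m ∧ L I c ≤ R I m := by
            refine ⟨by omega, le_rfl, ?_⟩
            have := bp_lr hB c
            have := bp_Rb hB c
            have := (Set.mem_Icc.mp (bp_hb hB)).2
            omega
          have hex : ∃ j, c + 2 ≤ j ∧ j ≤ m ∧ L I c ≤ R I j := ⟨m, hPm⟩
          set j := Nat.find hex with hjdef
          obtain ⟨hj1, hj2, hj3⟩ := Nat.find_spec hex
          rw [← hjdef] at hj1 hj2 hj3
          have hLjRc : L I j ≤ R I c := by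
            rcases eq_or_lt_of_le hj1 with hjeq | hjlt
            · -- j = c + 2
              obtain ⟨w, hw1, hw2⟩ := bp_cons hB (c + 1) (by omega)
              rw [Set.mem_Icc] at hw1 hw2
              rw [← hjeq]
              have : (c + 1) + 1 = c + 2 := rfl
              rw [this] at hw2
              omega
            · -- j > c + 2, so R (j-1) < L c
              have hnot := Nat.find_min hex (m := j - 1) (by omega)
              push_neg at hnot
              have hRj1 : R I (j - 1) < L I c := by
                have := hnot (by omega) (by omega)
                omega
              obtain ⟨w, hw1, hw2⟩ := bp_cons hB (j - 1) (by omega)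
              have e : j - 1 + 1 = j := by omega
              rw [e] at hw2
              rw [Set.mem_Icc] at hw1 hw2
              have := bp_lr hB c
              omega
          exact disj hmin c j hj1 hj2 (max (L I c) (L I j))
            (Set.mem_Icc.mpr ⟨le_max_left _ _, max_le (bp_lr hB c) hLjRc⟩)
            (Set.mem_Icc.mpr ⟨le_max_right _ _, max_le hj3 (bp_lr hB j)⟩)
  -- strict monotonicity of right endpoints
  have hR : ∀ c, c < m → R I c < R I (c + 1) := by
    intro c hc
    by_contra hcon
    push_neg at hcon
    have hl := hL c hc
    rcases eq_or_lt_of_le (Nat.succ_le_of_lt hc) with hceq | hclt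
    · -- c + 1 = m : then b ∈ I c, drop the last interval
      have hbm := Set.mem_Icc.mp (bp_hb hB)
      have hbm' : L I (c + 1) ≤ b ∧ b ≤ R I (c + 1) := by
        rw [show c + 1 = m from hceq]; exact hbm
      have hbc : b ∈ Set.Icc (L I c) (R I c) :=
        Set.mem_Icc.mpr ⟨by omega, by omega⟩
      refine key hmin (m - 1) (by omega) (fun i => i) ?_ ?_ ?_
      · exact bp_ha hB
      · have e : m - 1 = c := by omega
        simpa only [e] using hbc
      · intro i hi
        exact bp_cons hB i (by omega)
    · -- c + 1 < m : I (c+1) ⊆ I c, so I c meets I (c+2)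
      obtain ⟨w, hw1, hw2⟩ := bp_cons hB (c + 1) (by omega)
      rw [Set.mem_Icc] at hw1 hw2
      exact disj hmin c (c + 2) le_rfl (by omega) w
        (Set.mem_Icc.mpr ⟨by omega, by omega⟩)
        (Set.mem_Icc.mpr ⟨hw2.1, hw2.2⟩)
  -- conclude
  intro k
  have hk := k.isLt
  have e1 : idx m k.val = k.castSucc := by
    apply Fin.ext
    simp only [idx, Fin.coe_castSucc]
    omega
  have e2 : idx m (k.val + 1) = k.succ := by
    apply Fin.ext
    simp only [idx, Fin.val_succ]
    omega
  have h1 := hL k.val k.isLt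
  have h2 := hR k.val k.isLt
  simp only [L, R] at h1 h2
  rw [e1, e2] at h1 h2
  exact ⟨h1, h2⟩
end

section
/- Let δ be a positive integer and let x_0 ≤ x_1 ≤ … ≤ x_N be integers such that x_{i+3} − x_i ≥ 2δ for all 0 ≤ i ≤ N − 3. Suppose that for some index i ≤ N − 2 and some v ∈ δℤ one has r_δ(x_i) = r_δ(x_{i+1}) = r_δ(x_{i+2}) = v. Then for every index j, r_δ(x_j) ≠ v + δ and r_δ(x_j) ≠ v − δ. -/
/-- `v = r_δ x` : `v` is the value at `x` of the rounding map `r_δ : ℤ → δℤ`, i.e. `v` is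
the (unique) integer multiple of `δ` with `2v - δ ≤ 2x < 2v + δ` (the multiple of `δ`
nearest to `x`, ties broken upward). -/
def IsRoundTo (δ x v : ℤ) : Prop :=
  δ ∣ v ∧ 2 * v - δ ≤ 2 * x ∧ 2 * x < 2 * v + δ

/-- Let `δ > 0` and `x 0 ≤ x 1 ≤ … ≤ x N` be integers with
`x (i+3) - x i ≥ 2δ` whenever `i + 3 ≤ N`.  If three consecutive terms round to the
same value `v ∈ δℤ`, then no term of the sequence rounds to `v + δ` or to `v - δ`. -/
theorem rounding_triple_isolated
    (δ : ℤ) (hδ : 0 < δ) (N : ℕ) (x r : ℕ → ℤ)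
    (hmono : ∀ i j, i ≤ j → j ≤ N → x i ≤ x j)
    (hgap : ∀ i, i + 3 ≤ N → 2 * δ ≤ x (i + 3) - x i)
    (hr : ∀ i ≤ N, IsRoundTo δ (x i) (r i))
    (i : ℕ) (hi : i + 2 ≤ N) (v : ℤ) (hv : δ ∣ v)
    (h3 : r i = v ∧ r (i + 1) = v ∧ r (i + 2) = v) :
    ∀ j ≤ N, r j ≠ v + δ ∧ r j ≠ v - δ := by
  obtain ⟨h0, h1, h2⟩ := h3
  intro j hj
  obtain ⟨-, hl0, hu0⟩ := hr i (by omega)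
  obtain ⟨-, hl2, hu2⟩ := hr (i + 2) (by omega)
  rw [h0] at hl0 hu0
  rw [h2] at hl2 hu2
  obtain ⟨-, hlj, huj⟩ := hr j hj
  rcases lt_trichotomy j i with hc | hc | hc
  · -- j < i : use gap at i - 1
    have hi1 : 1 ≤ i := by omega
    have hg := hgap (i - 1) (by omega)
    have he : i - 1 + 3 = i + 2 := by omega
    rw [he] at hg
    have hm : x j ≤ x (i - 1) := hmono j (i - 1) (by omega) (by omega)
    constructor <;> intro heq <;> rw [heq] at hlj huj <;> omega
  · subst hc
    rw [h0] at hlj huj ⊢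
    constructor <;> intro heq <;> omega
  · rcases lt_or_ge j (i + 3) with hc2 | hc2
    · -- j = i+1 or i+2
      have : j = i + 1 ∨ j = i + 2 := by omega
      rcases this with h | h <;> subst h <;> [rw [h1]; rw [h2]] <;>
        constructor <;> intro heq <;> omega
    · have hg := hgap i (by omega)
      have hm : x (i + 3) ≤ x j := hmono (i + 3) j (by omega) hj
      constructor <;> intro heq <;> rw [heq] at hlj huj <;> omega
end

section
/- Let T be a tree (a connected acyclic simple graph) and let f : ℤ → V(T) be an injective map with f(n) adjacent to f(n+1) in T for every n ∈ ℤ; let P denote the image of f. Suppose that every connected component of the subgraph of T induced on V(T) ∖ P is finite. Then for every vertex v of T there exists exactly one vertex x ∈ P such that either v = x, or the connected component of v in the subgraph of T induced on V(T) ∖ {x} is finite. -/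
/-!
Both directions rest on the rays of `P`: for `n ≠ m`, the vertices of `P` on the same side of
`f n` as `f m` form an infinite ray in `T - f n`, so `f m`, and anything reaching it in
`T - f n`, lies in an infinite component of `T - f n`.

Uniqueness: for distinct `x, y ∈ P`, a path from `v` to `x` either avoids `y`, so `v` reaches
`x` in `T - y`, or its initial segment up to `y` reaches `y` in `T - x`; either way one of the
two components of `v` is infinite.

Existence for `v ∉ P`: the finite component `C` of `v` in `T - P` has a vertex `u` adjacent to
some `f a ∈ P`. The component of `v` in `T - f a` contains no vertex of `P`: otherwise it would
contain `f (a ± 1)`, a second neighbour of `f a` connected to `u` away from `f a`, closing a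
cycle. Hence it is contained in `C`.
-/

open Function Set

namespace SimpleGraph

section General

variable {V : Type*} {G : SimpleGraph V}

lemma reachable_of_adj_succ (g : ℕ → V) (hg : ∀ i, G.Adj (g i) (g (i + 1))) (i j : ℕ) :
    G.Reachable (g i) (g j) :=
  (reachable_iff_reflTransGen _ _).2 <|
    (reflTransGen_of_succ (fun k l => G.Adj (g k) (g l)) (fun k _ => hg k)
      (fun k _ => (hg k).symm)).lift g fun _ _ h => h

lemma infinite_supp_of_injective_of_adj_succ {g : ℕ → V} (hinj : Injective g)
    (hg : ∀ i, G.Adj (g i) (g (i + 1))) (i : ℕ) : (G.connectedComponentMk (g i)).supp.Infinite :=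
  (infinite_range_of_injective hinj).mono <| by
    rintro _ ⟨j, rfl⟩
    exact ConnectedComponent.sound (reachable_of_adj_succ g hg i j).symm

lemma IsAcyclic.not_reachable_induce_ne_of_adj (hG : G.IsAcyclic) {x u w : V} (hu : G.Adj x u)
    (hw : G.Adj x w) (huw : u ≠ w) :
    ¬ (G.induce {y | y ≠ x}).Reachable ⟨u, hu.ne'⟩ ⟨w, hw.ne'⟩ := by
  rintro ⟨p⟩
  obtain ⟨q, hq⟩ : ∃ q : G.Walk u w, x ∉ q.support := by
    refine ⟨p.map (Embedding.induce _).toHom, fun hx => ?_⟩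
    obtain ⟨z, -, hz⟩ := List.mem_map.1 <| (Walk.support_map _ p) ▸ hx
    exact z.2 hz
  have hbridge := isBridge_iff_forall_walk_mem_edges.1
    (isAcyclic_iff_forall_adj_isBridge.1 hG hu.symm) (q.concat hw.symm)
  rw [Walk.edges_concat, List.concat_eq_append, List.mem_append, List.mem_singleton] at hbridge
  rcases hbridge with hmem | heq
  · exact hq (q.snd_mem_support_of_mem_edges hmem)
  · exact huw (by simpa [hu.ne'] using heq)

lemma Preconnected.exists_reachable_induce_adj_notMem (hG : G.Preconnected) {s : Set V} (v : s)
    {y : V} (hy : y ∉ s) : ∃ u : s, ∃ z ∉ s, (G.induce s).Reachable v u ∧ G.Adj u z := by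
  obtain ⟨p⟩ := hG v y
  obtain ⟨d, -, ⟨hs, hr⟩, hd⟩ := p.exists_boundary_dart
    {w | ∃ h : w ∈ s, (G.induce s).Reachable v ⟨w, h⟩} ⟨v.2, Reachable.rfl⟩ fun ⟨h, _⟩ => hy h
  refine ⟨⟨d.fst, hs⟩, d.snd, fun h => hd ⟨h, hr.trans ?_⟩, hr, d.adj⟩
  exact Adj.reachable (G := G.induce s) d.adj

lemma image_val_supp_induce_subset {s t : Set V} (v : t) (hv : ↑v ∈ s)
    (h : ∀ w, (G.induce t).Reachable v w → ↑w ∈ s) :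
    Subtype.val '' ((G.induce t).connectedComponentMk v).supp ⊆
      Subtype.val '' ((G.induce s).connectedComponentMk ⟨v, hv⟩).supp := by
  classical
  rintro _ ⟨w, hw, rfl⟩
  obtain ⟨p⟩ := (ConnectedComponent.exact ((ConnectedComponent.mem_supp_iff _ _).1 hw)).symm
  have hp : ∀ z ∈ (p.map (Embedding.induce t).toHom).support, z ∈ s := by
    intro z hz
    rw [Walk.support_map, List.mem_map] at hz
    obtain ⟨z', hz', rfl⟩ := hz
    exact h z' (p.takeUntil z' hz').reachable
  exact ⟨_, ConnectedComponent.sound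
    ((p.map (Embedding.induce t).toHom).induce s hp).reachable.symm, rfl⟩

lemma Preconnected.reachable_induce_ne_or (hG : G.Preconnected) {x y v : V} (hxy : x ≠ y)
    (hvy : v ≠ y) :
    (∃ hvx : v ≠ x, (G.induce {z | z ≠ x}).Reachable ⟨v, hvx⟩ ⟨y, hxy.symm⟩) ∨
      (G.induce {z | z ≠ y}).Reachable ⟨v, hvy⟩ ⟨x, hxy⟩ := by
  classical
  obtain ⟨p, hp⟩ := (hG v x).exists_isPath
  by_cases hy : y ∈ p.support
  · have hx := Walk.endpoint_notMem_support_takeUntil hp hy hxy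
    exact .inl ⟨ne_of_mem_of_not_mem (Walk.start_mem_support _) hx,
      ⟨(p.takeUntil y hy).induce _ fun z hz (h : z = x) => hx (h ▸ hz)⟩⟩
  · exact .inr ⟨p.induce _ fun z hz (h : z = y) => hy (h ▸ hz)⟩

end General

section BiinfinitePath

variable {V : Type*} {T : SimpleGraph V} {f : ℤ → V}
variable (hinj : Injective f) (hadj : ∀ n : ℤ, T.Adj (f n) (f (n + 1)))
include hinj hadj

lemma exists_ray_induce_ne {n m : ℤ} (hm : f m ∈ {y | y ≠ f n}) :
    ∃ g : ℕ → {y | y ≠ f n}, Injective g ∧ (∀ i, (T.induce {y | y ≠ f n}).Adj (g i) (g (i + 1))) ∧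
      T.Adj (f n) (g 0) ∧ ↑(g 0) ∈ range f ∧ ∃ i, g i = ⟨f m, hm⟩ := by
  have hnm : n ≠ m := fun h => hm (h ▸ rfl)
  obtain ⟨ε, hε, k, rfl⟩ : ∃ ε : ℤ, (ε = 1 ∨ ε = -1) ∧ ∃ k : ℕ, m = n + ε * (k + 1) := by
    rcases hnm.lt_or_gt with h | h
    · exact ⟨1, .inl rfl, (m - n - 1).toNat, by omega⟩
    · exact ⟨-1, .inr rfl, (n - m - 1).toNat, by omega⟩
  have hne : ∀ i : ℕ, f (n + ε * (i + 1)) ≠ f n := fun i h => by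
    have := hinj h
    rcases hε with rfl | rfl <;> omega
  have hstep : ∀ k, T.Adj (f k) (f (k + ε)) := by
    rcases hε with rfl | rfl
    · exact hadj
    · intro k
      simpa only [neg_add_cancel_right] using (hadj (k + -1)).symm
  refine ⟨fun i => ⟨f (n + ε * (i + 1)), hne i⟩, fun i j h => ?_, fun i => ?_, ?_, ⟨_, rfl⟩, k, rfl⟩
  · have := hinj (congrArg Subtype.val h)
    rcases hε with rfl | rfl <;> omega
  · have h := hstep (n + ε * (i + 1))
    rw [show n + ε * (i + 1) + ε = n + ε * ((i + 1 : ℕ) + 1) by push_cast; ring] at h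
    exact h
  · simpa using hstep n

lemma infinite_supp_induce_ne_of_reachable {n m : ℤ} {v : V} (hv : v ≠ f n) (hm : f m ≠ f n)
    (h : (T.induce {y | y ≠ f n}).Reachable ⟨v, hv⟩ ⟨f m, hm⟩) :
    ((T.induce {y | y ≠ f n}).connectedComponentMk ⟨v, hv⟩).supp.Infinite := by
  obtain ⟨g, hg, hgadj, -, -, i, hgi⟩ := exists_ray_induce_ne hinj hadj hm
  rw [ConnectedComponent.sound h, ← hgi]
  exact infinite_supp_of_injective_of_adj_succ hg hgadj i

lemma eq_of_finite_supp_induce_ne (hT : T.Preconnected) {v x y : V}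
    (hx : x ∈ range f ∧ (v = x ∨ ∃ h : v ∈ {z | z ≠ x},
      ((T.induce {z | z ≠ x}).connectedComponentMk ⟨v, h⟩).supp.Finite))
    (hy : y ∈ range f ∧ (v = y ∨ ∃ h : v ∈ {z | z ≠ y},
      ((T.induce {z | z ≠ y}).connectedComponentMk ⟨v, h⟩).supp.Finite)) :
    x = y := by
  obtain ⟨⟨n, rfl⟩, hvx⟩ := hx
  obtain ⟨⟨m, rfl⟩, hvy⟩ := hy
  by_contra hne
  wlog hvm : v ≠ f m generalizing n m
  · exact this m hvy n hvx (Ne.symm hne) fun h => hne (h.symm.trans (not_not.1 hvm))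
  rcases hT.reachable_induce_ne_or hne hvm with ⟨hvn, hr⟩ | hr
  · rcases hvx with h | ⟨_, hfin⟩
    · exact hvn h
    · exact infinite_supp_induce_ne_of_reachable hinj hadj hvn (Ne.symm hne) hr hfin
  · rcases hvy with h | ⟨_, hfin⟩
    · exact hvm h
    · exact infinite_supp_induce_ne_of_reachable hinj hadj hvm hne hr hfin

lemma exists_finite_supp_induce_ne (hT : T.IsTree)
    (hfin : ∀ c : (T.induce (range f)ᶜ).ConnectedComponent, c.supp.Finite) (v : V) :
    ∃ x, x ∈ range f ∧ (v = x ∨ ∃ h : v ∈ {y | y ≠ x},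
      ((T.induce {y | y ≠ x}).connectedComponentMk ⟨v, h⟩).supp.Finite) := by
  by_cases hv : v ∈ range f
  · exact ⟨v, hv, .inl rfl⟩
  obtain ⟨u, _, hz, hvu, hua⟩ :=
    hT.connected.preconnected.exists_reachable_induce_adj_notMem (s := (range f)ᶜ) ⟨v, hv⟩
      (not_not.2 (mem_range_self 0))
  obtain ⟨a, rfl⟩ := not_not.1 hz
  have hva : v ≠ f a := fun h => hv ⟨a, h.symm⟩
  refine ⟨f a, mem_range_self a, .inr ⟨hva, ?_⟩⟩
  have hsub : (range f)ᶜ ⊆ {y | y ≠ f a} := fun y hy h => hy ⟨a, h.symm⟩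
  have havoid : ∀ w, (T.induce {y | y ≠ f a}).Reachable ⟨v, hva⟩ w → ↑w ∈ (range f)ᶜ := by
    rintro w hw ⟨b, hb⟩
    obtain ⟨g, -, hgadj, hg0, hg0P, i, hgi⟩ := exists_ray_induce_ne hinj hadj (hb ▸ w.2)
    refine hT.isAcyclic.not_reachable_induce_ne_of_adj hua.symm hg0
      (fun h => u.2 (h ▸ hg0P)) ?_
    have hwg : w = g i := by rw [hgi]; exact Subtype.ext hb.symm
    refine (hvu.map (induceHomOfLE T hsub).toHom).symm.trans (hw.trans ?_)
    rw [hwg]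
    exact reachable_of_adj_succ g hgadj i 0
  exact Finite.of_finite_image (((hfin _).image _).subset
    (image_val_supp_induce_subset _ hv havoid)) Subtype.val_injective.injOn

end BiinfinitePath

end SimpleGraph

open SimpleGraph

/-- Let `T` be a tree and let `f : ℤ → V` be a bi-infinite path in `T`
(injective, with `f n` adjacent to `f (n+1)`), with image `P = Set.range f`.  Suppose
every connected component of the subgraph of `T` induced on the complement of `P` is
finite.  Then for every vertex `v` there is exactly one `x ∈ P` such that either `v = x`,
or the connected component of `v` in the subgraph induced on `V ∖ {x}` is finite. -/
theorem biinfinite_path_unique_separator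
    {V : Type*} (T : SimpleGraph V) (hT : T.IsTree)
    (f : ℤ → V) (hinj : Function.Injective f)
    (hadj : ∀ n : ℤ, T.Adj (f n) (f (n + 1)))
    (hfin : ∀ c : (SimpleGraph.induce ((Set.range f)ᶜ) T).ConnectedComponent,
      c.supp.Finite) :
    ∀ v : V, ∃! x : V, x ∈ Set.range f ∧
      (v = x ∨ ∃ h : v ∈ ({y : V | y ≠ x}),
        (((SimpleGraph.induce {y : V | y ≠ x} T).connectedComponentMk ⟨v, h⟩).supp).Finite) :=
  fun v => existsUnique_of_exists_of_unique
    (exists_finite_supp_induce_ne hinj hadj hT hfin v)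
    fun _ _ => eq_of_finite_supp_induce_ne hinj hadj hT.connected.preconnected
end
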